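/- arXiv:1707.08942 — 8 statements merged into one kernel-verified Lean document; each statement's English description precedes it below -/
import Mathlib

section
/- Let a > 0, b ∈ ℝ, β > 0 with b − 1 < β < a. Then ∫_0^∞ x^{β−1} U(a,b;x) dx = Γ(a−β) Γ(β−b+1) Γ(β) / (Γ(a) Γ(a−b+1)). -/
/-!
Write `U(a,b;x)` as its integral and exchange the order of integration (the integrand is
nonnegative). The `x`-integral is a Gamma integral, `∫ x^(β-1) e^(-xt) dx = Γ(β) t^(-β)`, and
what remains is the beta integral of the second kind `∫ t^(a-β-1) (1+t)^(b-a-1) dt`, which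
`u ↦ u / (1 - u)` turns into the Euler integral `B(a-β, β-b+1)` over `(0,1)`.
-/

open MeasureTheory Set

/-- The Tricomi confluent hypergeometric function, defined by its integral
representation for `a > 0` and `x > 0`. -/
noncomputable def tricomiU (a b x : ℝ) : ℝ :=
  (1 / Real.Gamma a) *
    ∫ t in Ioi (0:ℝ), t ^ (a - 1) * Real.exp (-(x * t)) * (1 + t) ^ (b - a - 1)

open Real ProbabilityTheory

theorem integral_integral_swap_of_nonneg {α γ : Type*} [MeasurableSpace α] [MeasurableSpace γ]
    {μ : Measure α} {ν : Measure γ} [SFinite μ] [SFinite ν] {f : α → γ → ℝ}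
    (hf : AEStronglyMeasurable (Function.uncurry f) (μ.prod ν))
    (hf_nonneg : ∀ᵐ x ∂μ, 0 ≤ᵐ[ν] f x) (hf_sec : ∀ᵐ x ∂μ, Integrable (f x) ν)
    (hf_int : Integrable (fun x => ∫ y, f x y ∂ν) μ) :
    ∫ y, ∫ x, f x y ∂μ ∂ν = ∫ x, ∫ y, f x y ∂ν ∂μ := by
  refine (integral_integral_swap ((integrable_prod_iff hf).2 ⟨hf_sec, hf_int.congr ?_⟩)).symm
  filter_upwards [hf_nonneg] with x hx
  exact integral_congr_ae (by filter_upwards [hx] with y hy; exact (norm_of_nonneg hy).symm)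

theorem integral_rpow_mul_one_sub_rpow_eq_beta {p q : ℝ} (hp : 0 < p) (hq : 0 < q) :
    ∫ x in (0:ℝ)..1, x ^ (p - 1) * (1 - x) ^ (q - 1) = beta p q := by
  have h : Complex.betaIntegral p q =
      ((∫ x in (0:ℝ)..1, x ^ (p - 1) * (1 - x) ^ (q - 1) : ℝ) : ℂ) := by
    rw [Complex.betaIntegral, ← intervalIntegral.integral_ofReal]
    refine intervalIntegral.integral_congr fun x hx => ?_
    rw [uIcc_of_le zero_le_one] at hx
    rw [Complex.ofReal_mul, Complex.ofReal_cpow hx.1, Complex.ofReal_cpow (sub_nonneg.2 hx.2)]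
    push_cast
    ring
  rw [beta_eq_betaIntegralReal p q hp hq, h, Complex.ofReal_re]

theorem image_div_one_sub_Ioo : (fun u : ℝ => u / (1 - u)) '' Ioo 0 1 = Ioi 0 := by
  ext t
  simp only [mem_image, mem_Ioi, mem_Ioo]
  constructor
  · rintro ⟨u, ⟨hu0, hu1⟩, rfl⟩
    exact div_pos hu0 (sub_pos.2 hu1)
  · intro ht
    refine ⟨t / (1 + t), ⟨by positivity, (div_lt_one (by positivity)).2 (by linarith)⟩, ?_⟩
    field_simp
    ring

theorem injOn_div_one_sub : InjOn (fun u : ℝ => u / (1 - u)) (Ioo 0 1) := by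
  intro u hu v hv h
  have hu1 : 1 - u ≠ 0 := (sub_pos.2 hu.2).ne'
  have hv1 : 1 - v ≠ 0 := (sub_pos.2 hv.2).ne'
  field_simp at h
  linarith

theorem hasDerivAt_div_one_sub {u : ℝ} (hu : 1 - u ≠ 0) :
    HasDerivAt (fun u : ℝ => u / (1 - u)) (1 / (1 - u) ^ 2) u := by
  refine ((hasDerivAt_id' u).div ((hasDerivAt_id' u).const_sub 1) hu).congr_deriv ?_
  ring

theorem abs_deriv_mul_rpow_div_one_sub {p q u : ℝ} (hu : u ∈ Ioo (0:ℝ) 1) :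
    |1 / (1 - u) ^ 2| * ((u / (1 - u)) ^ (p - 1) * (1 + u / (1 - u)) ^ (-(p + q))) =
      u ^ (p - 1) * (1 - u) ^ (q - 1) := by
  have h1 : 0 < 1 - u := sub_pos.2 hu.2
  have habs : |1 / (1 - u) ^ 2| = (1 - u) ^ (-2 : ℝ) := by
    rw [abs_of_pos (by positivity), rpow_neg h1.le, one_div, rpow_two]
  have hdiv : (u / (1 - u)) ^ (p - 1) = u ^ (p - 1) * (1 - u) ^ (-(p - 1)) := by
    rw [div_rpow hu.1.le h1.le, rpow_neg h1.le, div_eq_mul_inv]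
  have hadd : (1 + u / (1 - u)) ^ (-(p + q)) = (1 - u) ^ (p + q) := by
    rw [show 1 + u / (1 - u) = (1 - u)⁻¹ by field_simp; ring, inv_rpow h1.le, ← rpow_neg h1.le,
      neg_neg]
  rw [habs, hdiv, hadd, mul_left_comm, mul_assoc, ← rpow_add h1, ← rpow_add h1]
  ring_nf

theorem integral_rpow_mul_one_add_rpow_neg_eq_beta {p q : ℝ} (hp : 0 < p) (hq : 0 < q) :
    ∫ t in Ioi (0:ℝ), t ^ (p - 1) * (1 + t) ^ (-(p + q)) = beta p q := by
  rw [← image_div_one_sub_Ioo, integral_image_eq_integral_abs_deriv_smul measurableSet_Ioo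
      (fun u hu => (hasDerivAt_div_one_sub (sub_pos.2 hu.2).ne').hasDerivWithinAt)
      injOn_div_one_sub,
    setIntegral_congr_fun measurableSet_Ioo fun u hu =>
      (smul_eq_mul _ _).trans (abs_deriv_mul_rpow_div_one_sub hu),
    ← integral_Ioc_eq_integral_Ioo, ← intervalIntegral.integral_of_le zero_le_one,
    integral_rpow_mul_one_sub_rpow_eq_beta hp hq]

theorem integral_rpow_mul_exp_neg_mul_Ioi_eq_Gamma_mul {β t : ℝ} (hβ : 0 < β) (ht : 0 < t) :
    ∫ x in Ioi (0:ℝ), x ^ (β - 1) * exp (-(t * x)) = Gamma β * t ^ (-β) := by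
  rw [integral_rpow_mul_exp_neg_mul_Ioi hβ ht, one_div, inv_rpow ht.le, ← rpow_neg ht.le, mul_comm]

theorem integral_rpow_mul_integral_exp_mul_one_add_rpow_eq {a b β : ℝ} (hβ : 0 < β)
    (hβb : b - 1 < β) (hβa : β < a) :
    ∫ x in Ioi (0:ℝ), x ^ (β - 1) *
        ∫ t in Ioi (0:ℝ), t ^ (a - 1) * exp (-(x * t)) * (1 + t) ^ (b - a - 1) =
      Gamma β * beta (a - β) (β - b + 1) := by
  set f : ℝ → ℝ → ℝ := fun t x =>
    t ^ (a - 1) * (1 + t) ^ (b - a - 1) * (x ^ (β - 1) * exp (-(t * x)))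
  set h : ℝ → ℝ := fun t => Gamma β * (t ^ (a - β - 1) * (1 + t) ^ (-((a - β) + (β - b + 1))))
  have hinner : ∀ t ∈ Ioi (0:ℝ), ∫ x in Ioi (0:ℝ), f t x = h t := by
    intro t ht
    rw [integral_const_mul, integral_rpow_mul_exp_neg_mul_Ioi_eq_Gamma_mul hβ ht]
    simp only [h]
    rw [show -((a - β) + (β - b + 1)) = b - a - 1 by ring, show a - β - 1 = a - 1 + -β by ring,
      rpow_add ht]
    ring
  have houter : ∫ t in Ioi (0:ℝ), h t = Gamma β * beta (a - β) (β - b + 1) := by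
    rw [integral_const_mul, integral_rpow_mul_one_add_rpow_neg_eq_beta (by linarith) (by linarith)]
  have houter_ne : ∫ t in Ioi (0:ℝ), h t ≠ 0 := by
    rw [houter]
    exact mul_ne_zero (Gamma_pos_of_pos hβ).ne' (beta_pos (by linarith) (by linarith)).ne'
  calc _ = ∫ x in Ioi (0:ℝ), ∫ t in Ioi (0:ℝ), f t x := by
        refine setIntegral_congr_fun measurableSet_Ioi fun x _ => ?_
        rw [← integral_const_mul]
        congr with t
        simp only [f, mul_comm t x]
        ring
    _ = ∫ t in Ioi (0:ℝ), ∫ x in Ioi (0:ℝ), f t x := by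
        -- integrability of the sections and of the inner integral: their integrals are nonzero
        refine integral_integral_swap_of_nonneg (Measurable.aestronglyMeasurable (by fun_prop))
          (ae_restrict_of_forall_mem measurableSet_Ioi fun t (ht : 0 < t) =>
            ae_restrict_of_forall_mem measurableSet_Ioi fun x (hx : 0 < x) => by positivity)
          (ae_restrict_of_forall_mem measurableSet_Ioi fun t (ht : 0 < t) => ?_)
          ((Integrable.of_integral_ne_zero houter_ne).congr
            (ae_restrict_of_forall_mem measurableSet_Ioi fun t ht => (hinner t ht).symm))
        refine (Integrable.of_integral_ne_zero ?_).const_mul _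
        rw [integral_rpow_mul_exp_neg_mul_Ioi_eq_Gamma_mul hβ ht]
        exact mul_ne_zero (Gamma_pos_of_pos hβ).ne' (rpow_pos_of_pos ht _).ne'
    _ = Gamma β * beta (a - β) (β - b + 1) := by
        rw [setIntegral_congr_fun measurableSet_Ioi hinner, houter]

theorem stmt_4 (a b β : ℝ) (ha : 0 < a) (hβ : 0 < β) (hβb : b - 1 < β) (hβa : β < a) :
    ∫ x in Ioi (0:ℝ), x ^ (β - 1) * tricomiU a b x =
      Real.Gamma (a - β) * Real.Gamma (β - b + 1) * Real.Gamma β /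
        (Real.Gamma a * Real.Gamma (a - b + 1)) := by
  have hΓa : Gamma a ≠ 0 := (Gamma_pos_of_pos ha).ne'
  have hΓab : Gamma (a - b + 1) ≠ 0 := (Gamma_pos_of_pos (by linarith)).ne'
  calc _ = (1 / Gamma a) * ∫ x in Ioi (0:ℝ), x ^ (β - 1) *
        ∫ t in Ioi (0:ℝ), t ^ (a - 1) * exp (-(x * t)) * (1 + t) ^ (b - a - 1) := by
        rw [← integral_const_mul]
        simp only [tricomiU, mul_left_comm]
    _ = _ := by
        rw [integral_rpow_mul_integral_exp_mul_one_add_rpow_eq hβ hβb hβa, beta,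
          show a - β + (β - b + 1) = a - b + 1 by ring]
        field_simp
end

section
/- For every b > 0 and every μ with 0 < μ < 1, ∫_0^∞ x^{μ−1} Ei(−bx) dx = −(b^{−μ}/μ) Γ(μ). -/
open MeasureTheory Set

/-- `negEi x = Ei (-x)`, the exponential integral evaluated at `-x`, for `x > 0`. -/
noncomputable def negEi (x : ℝ) : ℝ := -∫ t in Ioi (1:ℝ), Real.exp (-(x * t)) / t

/-!
Writing `Ei(-bx) = -∫_1^∞ e^{-bxt}/t dt` and exchanging the order of integration (Tonelli, the
integrand being nonnegative), the inner integral over `x` is a Gamma integral,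
`∫_0^∞ x^{μ-1} e^{-bxt} dx = Γ(μ) (bt)^{-μ}`, and the remaining integral is
`∫_1^∞ t^{-μ-1} dt = 1/μ`.
-/

namespace NegEi

open Real

noncomputable def kernel (b μ t x : ℝ) : ℝ := x ^ (μ - 1) * (exp (-(b * x * t)) / t)

variable {b μ : ℝ}

lemma kernel_nonneg (t : ℝ) (ht : 0 < t) {x : ℝ} (hx : 0 < x) : 0 ≤ kernel b μ t x := by
  unfold kernel
  positivity

lemma integrableOn_kernel (hb : 0 < b) (hμ : 0 < μ) {t : ℝ} (ht : 0 < t) :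
    IntegrableOn (kernel b μ t) (Ioi 0) := by
  have hGamma : IntegrableOn (fun x : ℝ => x ^ (μ - 1) * exp (-(b * t) * x ^ (1 : ℝ))) (Ioi 0) :=
    integrableOn_rpow_mul_exp_neg_mul_rpow (by linarith) one_pos (by positivity)
  refine IntegrableOn.congr_fun (hGamma.mul_const (1 / t)) (fun x _ => ?_) measurableSet_Ioi
  rw [kernel, rpow_one, show -(b * t) * x = -(b * x * t) by ring]
  ring

lemma integral_kernel (hb : 0 < b) (hμ : 0 < μ) {t : ℝ} (ht : 0 < t) :
    ∫ x in Ioi 0, kernel b μ t x = b ^ (-μ) * Gamma μ * t ^ (-(μ + 1)) := by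
  have hsplit : ∫ x in Ioi 0, kernel b μ t x
      = (∫ x in Ioi 0, x ^ (μ - 1) * exp (-((b * t) * x))) * (1 / t) := by
    rw [← integral_mul_const]
    refine setIntegral_congr_fun measurableSet_Ioi (fun x _ => ?_)
    rw [kernel, show (b * t) * x = b * x * t by ring]
    ring
  rw [hsplit, integral_rpow_mul_exp_neg_mul_Ioi hμ (by positivity), one_div (b * t),
    inv_rpow (by positivity), ← rpow_neg (by positivity), mul_rpow hb.le ht.le, one_div t,
    ← rpow_neg_one t, show -(μ + 1) = -μ + -1 by ring, rpow_add ht]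
  ring

lemma integrable_uncurry_kernel (hb : 0 < b) (hμ : 0 < μ) :
    Integrable (Function.uncurry (kernel b μ))
      ((volume.restrict (Ioi 1)).prod (volume.restrict (Ioi 0))) := by
  have hmeas : AEStronglyMeasurable (Function.uncurry (kernel b μ))
      ((volume.restrict (Ioi 1)).prod (volume.restrict (Ioi 0))) := by
    apply Measurable.aestronglyMeasurable
    change Measurable fun p : ℝ × ℝ => p.2 ^ (μ - 1) * (exp (-(b * p.2 * p.1)) / p.1)
    fun_prop
  rw [integrable_prod_iff hmeas]
  constructor
  · filter_upwards [self_mem_ae_restrict measurableSet_Ioi] with t (ht : 1 < t)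
    exact integrableOn_kernel hb hμ (one_pos.trans ht)
  · have hpow : IntegrableOn (fun t : ℝ => b ^ (-μ) * Gamma μ * t ^ (-(μ + 1))) (Ioi 1) :=
      (integrableOn_Ioi_rpow_of_lt (by linarith) one_pos).const_mul _
    refine hpow.congr ?_
    filter_upwards [self_mem_ae_restrict measurableSet_Ioi] with t (ht : 1 < t)
    have ht0 : 0 < t := one_pos.trans ht
    rw [← integral_kernel hb hμ ht0]
    refine setIntegral_congr_fun measurableSet_Ioi (fun x hx => ?_)
    exact (norm_of_nonneg (kernel_nonneg t ht0 hx)).symm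

lemma integral_rpow_mul_negEi_eq_neg_integral_integral_kernel :
    ∫ x in Ioi (0 : ℝ), x ^ (μ - 1) * negEi (b * x)
      = -∫ x in Ioi (0 : ℝ), ∫ t in Ioi (1 : ℝ), kernel b μ t x := by
  rw [← integral_neg]
  refine setIntegral_congr_fun measurableSet_Ioi (fun x _ => ?_)
  rw [negEi, mul_neg, ← integral_const_mul]
  rfl

end NegEi

open NegEi in
theorem stmt_5_general (b μ : ℝ) (hb : 0 < b) (hμ0 : 0 < μ) :
    ∫ x in Ioi (0:ℝ), x ^ (μ - 1) * negEi (b * x) =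
      -(b ^ (-μ) / μ) * Real.Gamma μ := by
  have hinner : ∫ t in Ioi (1 : ℝ), ∫ x in Ioi (0 : ℝ), kernel b μ t x
      = ∫ t in Ioi (1 : ℝ), b ^ (-μ) * Real.Gamma μ * t ^ (-(μ + 1)) :=
    setIntegral_congr_fun measurableSet_Ioi
      (fun t (ht : 1 < t) => integral_kernel hb hμ0 (one_pos.trans ht))
  rw [integral_rpow_mul_negEi_eq_neg_integral_integral_kernel,
    ← integral_integral_swap (integrable_uncurry_kernel hb hμ0), hinner, integral_const_mul,
    integral_Ioi_rpow_of_lt (by linarith) one_pos, Real.one_rpow, show -(μ + 1) + 1 = -μ by ring]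
  field_simp

theorem stmt_5 (b μ : ℝ) (hb : 0 < b) (hμ0 : 0 < μ) (hμ1 : μ < 1) :
    ∫ x in Ioi (0:ℝ), x ^ (μ - 1) * negEi (b * x) =
      -(b ^ (-μ) / μ) * Real.Gamma μ :=
  stmt_5_general b μ hb hμ0
end

section
/- Let ν > 0, μ > 0 and β > 0. Then ∫_0^∞ x^{ν−1} e^{−μx} Ei(−βx) dx = −(Γ(ν)/(ν (β+μ)^ν)) · Σ_{n=0}^∞ [ (1)_n (ν)_n / ((ν+1)_n n!) ] (μ/(β+μ))^n. -/
/-!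
Write `Ei(-y) = -E₁(y)` with `E₁(y) = ∫₁^∞ e^{-yt}/t dt`. Everything is nonnegative, so Tonelli lets
us integrate in `x` first, where we meet a Gamma integral: the left side is
`-Γ(ν) ∫₁^∞ (μ+βt)^{-ν} t⁻¹ dt`. Expanding `t⁻¹ = β / (c (1 - μ/c))`, `c = μ+βt`, as a geometric
series and integrating term by term gives `-Γ(ν) (β+μ)^{-ν} ∑ zⁿ/(ν+n)` with `z = μ/(β+μ)`, and
`(1)ₙ (ν)ₙ / ((ν+1)ₙ n!) = ν/(ν+n)`.
-/

open MeasureTheory Set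

/-- The Pochhammer symbol `(q)ₙ = q (q+1) ⋯ (q+n-1)`. -/
noncomputable def poch (q : ℝ) (n : ℕ) : ℝ := ∏ i ∈ Finset.range n, (q + (i : ℝ))

open Real Filter Topology

lemma poch_one (n : ℕ) : poch 1 n = n.factorial := by
  induction n with
  | zero => simp [poch]
  | succ n ih =>
    rw [poch, Finset.prod_range_succ, ← poch, ih, Nat.factorial_succ]
    push_cast
    ring

lemma poch_pos {q : ℝ} (hq : 0 < q) (n : ℕ) : 0 < poch q n :=
  Finset.prod_pos fun _ _ => by positivity

lemma mul_poch_add_one (q : ℝ) (n : ℕ) : q * poch (q + 1) n = poch q n * (q + n) := by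
  induction n with
  | zero => simp [poch]
  | succ n ih =>
    simp only [poch, Finset.prod_range_succ] at ih ⊢
    rw [← mul_assoc, ih]
    push_cast
    ring

lemma poch_one_mul_poch_div_poch_add_one_mul_factorial {q : ℝ} (hq : 0 < q) (n : ℕ) :
    poch 1 n * poch q n / (poch (q + 1) n * n.factorial) = q / (q + n) := by
  have hpoch : poch (q + 1) n * n.factorial ≠ 0 :=
    mul_ne_zero (poch_pos (by linarith) n).ne' (by positivity)
  rw [poch_one, div_eq_div_iff hpoch (by positivity)]
  linear_combination -(n.factorial : ℝ) * mul_poch_add_one q n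

noncomputable def expIntegralE1 (y : ℝ) : ℝ := ∫ t in Ioi (1:ℝ), exp (-(y * t)) / t

lemma integrableOn_exp_neg_mul_div_Ioi_one {y : ℝ} (hy : 0 < y) :
    IntegrableOn (fun t => exp (-(y * t)) / t) (Ioi 1) := by
  refine (exp_neg_integrableOn_Ioi 1 hy).mono' (by fun_prop : Measurable _).aestronglyMeasurable ?_
  filter_upwards [self_mem_ae_restrict measurableSet_Ioi] with t (ht : 1 < t)
  rw [norm_of_nonneg (by positivity), neg_mul]
  exact div_le_self (exp_pos _).le ht.le

lemma ofReal_expIntegralE1 {y : ℝ} (hy : 0 < y) :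
    ENNReal.ofReal (expIntegralE1 y) = ∫⁻ t in Ioi 1, ENNReal.ofReal (exp (-(y * t)) / t) :=
  ofReal_integral_eq_lintegral_ofReal (integrableOn_exp_neg_mul_div_Ioi_one hy) <|
    (ae_restrict_iff' measurableSet_Ioi).2 <| .of_forall fun t (ht : 1 < t) => by positivity

lemma expIntegralE1_nonneg (y : ℝ) : 0 ≤ expIntegralE1 y :=
  setIntegral_nonneg measurableSet_Ioi fun t (ht : 1 < t) => by positivity

@[fun_prop]
lemma measurable_expIntegralE1 : Measurable expIntegralE1 :=
  (StronglyMeasurable.integral_prod_right' (f := fun p : ℝ × ℝ => exp (-(p.1 * p.2)) / p.2)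
    (by fun_prop : Measurable _).stronglyMeasurable).measurable

lemma lintegral_rpow_mul_exp_neg_mul_Ioi {ν r : ℝ} (hν : 0 < ν) (hr : 0 < r) :
    ∫⁻ x in Ioi 0, ENNReal.ofReal (x ^ (ν - 1) * exp (-(r * x))) =
      ENNReal.ofReal (Gamma ν * r ^ (-ν)) := by
  have hint : IntegrableOn (fun x : ℝ => x ^ (ν - 1) * exp (-(r * x))) (Ioi 0) := by
    simpa using integrableOn_rpow_mul_exp_neg_mul_rpow (p := 1) (by linarith) one_pos hr
  rw [← ofReal_integral_eq_lintegral_ofReal hint, integral_rpow_mul_exp_neg_mul_Ioi hν hr,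
    one_div, inv_rpow hr.le, ← rpow_neg hr.le, mul_comm]
  exact (ae_restrict_iff' measurableSet_Ioi).2 <| .of_forall fun x (hx : 0 < x) => by positivity

lemma ofReal_rpow_mul_exp_neg_mul_mul_expIntegralE1 {ν μ β x : ℝ} (hβ : 0 < β) (hx : 0 < x) :
    ENNReal.ofReal (x ^ (ν - 1) * exp (-(μ * x)) * expIntegralE1 (β * x)) =
      ∫⁻ t in Ioi 1, ENNReal.ofReal (x ^ (ν - 1) * exp (-((μ + β * t) * x)) * t⁻¹) := by
  rw [ENNReal.ofReal_mul (by positivity), ofReal_expIntegralE1 (by positivity),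
    ← lintegral_const_mul' _ _ ENNReal.ofReal_ne_top]
  refine setLIntegral_congr_fun measurableSet_Ioi fun t (ht : 1 < t) => ?_
  rw [← ENNReal.ofReal_mul (by positivity), add_mul, neg_add, exp_add]
  ring_nf

lemma lintegral_rpow_mul_exp_neg_mul_mul_expIntegralE1 {ν μ β : ℝ} (hν : 0 < ν) (hμ : 0 ≤ μ)
    (hβ : 0 < β) :
    ∫⁻ x in Ioi 0, ENNReal.ofReal (x ^ (ν - 1) * exp (-(μ * x)) * expIntegralE1 (β * x)) =
      ENNReal.ofReal (Gamma ν) *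
        ∫⁻ t in Ioi 1, ENNReal.ofReal ((μ + β * t) ^ (-ν) / t) := by
  calc _ = ∫⁻ x in Ioi 0, ∫⁻ t in Ioi 1,
          ENNReal.ofReal (x ^ (ν - 1) * exp (-((μ + β * t) * x)) * t⁻¹) :=
        setLIntegral_congr_fun measurableSet_Ioi fun x hx =>
          ofReal_rpow_mul_exp_neg_mul_mul_expIntegralE1 hβ hx
    _ = ∫⁻ t in Ioi 1, ∫⁻ x in Ioi 0,
          ENNReal.ofReal (x ^ (ν - 1) * exp (-((μ + β * t) * x)) * t⁻¹) :=
        lintegral_lintegral_swap (by fun_prop : Measurable _).aemeasurable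
    _ = ∫⁻ t in Ioi 1, ENNReal.ofReal (Gamma ν) * ENNReal.ofReal ((μ + β * t) ^ (-ν) / t) := by
        refine setLIntegral_congr_fun measurableSet_Ioi fun t (ht : 1 < t) => ?_
        have ht₀ : 0 < t := by linarith
        simp_rw [ENNReal.ofReal_mul' (inv_nonneg.2 ht₀.le)]
        rw [lintegral_mul_const' _ _ ENNReal.ofReal_ne_top,
          lintegral_rpow_mul_exp_neg_mul_Ioi hν (by positivity),
          ← ENNReal.ofReal_mul' (inv_nonneg.2 ht₀.le),
          ← ENNReal.ofReal_mul (Gamma_pos_of_pos hν).le, div_eq_mul_inv, mul_assoc]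
    _ = _ := lintegral_const_mul' _ _ ENNReal.ofReal_ne_top

lemma lintegral_add_mul_rpow_neg_sub_one_Ioi_one {μ β r : ℝ} (hμ : 0 ≤ μ) (hβ : 0 < β)
    (hr : 0 < r) :
    ∫⁻ t in Ioi 1, ENNReal.ofReal ((μ + β * t) ^ (-r - 1)) =
      ENNReal.ofReal ((μ + β) ^ (-r) / (β * r)) := by
  set g : ℝ → ℝ := fun t => -(μ + β * t) ^ (-r) / (β * r)
  have hderiv : ∀ t ∈ Ici (1 : ℝ), HasDerivAt g ((μ + β * t) ^ (-r - 1)) t := by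
    intro t (ht : 1 ≤ t)
    have hc : 0 < μ + β * t := by nlinarith
    refine ((((hasDerivAt_id t).const_mul β).const_add μ).rpow_const (p := -r)
      (.inl hc.ne')).neg.div_const (β * r) |>.congr_deriv ?_
    simp only [id]
    field_simp
  have hg : Tendsto g atTop (𝓝 0) := by
    simpa [g] using ((tendsto_rpow_neg_atTop hr).comp
      (tendsto_atTop_add_const_left _ μ (tendsto_id.const_mul_atTop hβ))).neg.div_const (β * r)
  have hpos : ∀ t ∈ Ioi (1 : ℝ), 0 ≤ (μ + β * t) ^ (-r - 1) := fun t (ht : 1 < t) => by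
    have : 0 < μ + β * t := by nlinarith
    positivity
  rw [← ofReal_integral_eq_lintegral_ofReal (integrableOn_Ioi_deriv_of_nonneg' hderiv hpos hg)
    ((ae_restrict_iff' measurableSet_Ioi).2 (.of_forall hpos)),
    integral_Ioi_of_hasDerivAt_of_nonneg' hderiv hpos hg]
  simp only [g, mul_one, zero_sub, neg_div, neg_neg]

lemma hasSum_mul_pow_mul_add_mul_rpow {μ β ν t : ℝ} (hμ : 0 ≤ μ) (hβ : 0 < β) (ht : 0 < t) :
    HasSum (fun n : ℕ => β * μ ^ n * (μ + β * t) ^ (-(ν + n) - 1)) ((μ + β * t) ^ (-ν) / t) := by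
  have hc : 0 < μ + β * t := by positivity
  have hq : μ / (μ + β * t) < 1 := (div_lt_one hc).2 (by linarith [mul_pos hβ ht])
  have hsum : (μ + β * t) ^ (-ν) / t = β * (μ + β * t) ^ (-ν - 1) * (1 - μ / (μ + β * t))⁻¹ := by
    rw [rpow_sub_one hc.ne', one_sub_div hc.ne']
    field_simp
    ring
  have hterm (n : ℕ) : β * μ ^ n * (μ + β * t) ^ (-(ν + n) - 1) =
      β * (μ + β * t) ^ (-ν - 1) * (μ / (μ + β * t)) ^ n := by
    rw [rpow_sub_one hc.ne', rpow_sub_one hc.ne', show -(ν + n) = -ν - n by ring,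
      rpow_sub_natCast hc.ne', div_pow]
    field_simp
  simpa only [hsum, hterm] using
    (hasSum_geometric_of_lt_one (by positivity) hq).mul_left (β * (μ + β * t) ^ (-ν - 1))

lemma summable_pow_div_add_of_lt_one {ν z : ℝ} (hν : 0 < ν) (hz₀ : 0 ≤ z) (hz₁ : z < 1) :
    Summable fun n : ℕ => z ^ n / (ν + n) :=
  ((summable_geometric_of_lt_one hz₀ hz₁).div_const ν).of_nonneg_of_le
    (fun n => by positivity) fun n => div_le_div_of_nonneg_left (by positivity) hν (by simp)

lemma lintegral_add_mul_rpow_neg_div_Ioi_one {ν μ β : ℝ} (hν : 0 < ν) (hμ : 0 ≤ μ) (hβ : 0 < β) :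
    ∫⁻ t in Ioi 1, ENNReal.ofReal ((μ + β * t) ^ (-ν) / t) =
      ENNReal.ofReal ((β + μ) ^ (-ν) * ∑' n : ℕ, (μ / (β + μ)) ^ n / (ν + n)) := by
  have hB : 0 < β + μ := by positivity
  have hterm_nonneg (n : ℕ) (t : ℝ) (ht : 1 < t) :
      0 ≤ β * μ ^ n * (μ + β * t) ^ (-(ν + n) - 1) := by
    have : 0 < μ + β * t := by nlinarith
    positivity
  calc _ = ∫⁻ t in Ioi 1, ∑' n : ℕ, ENNReal.ofReal (β * μ ^ n * (μ + β * t) ^ (-(ν + n) - 1)) := by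
        refine setLIntegral_congr_fun measurableSet_Ioi fun t (ht : 1 < t) => ?_
        have hsum := hasSum_mul_pow_mul_add_mul_rpow (ν := ν) hμ hβ (by linarith : 0 < t)
        rw [← hsum.tsum_eq, ENNReal.ofReal_tsum_of_nonneg (fun n => hterm_nonneg n t ht)
          hsum.summable]
    _ = ∑' n : ℕ, ∫⁻ t in Ioi 1, ENNReal.ofReal (β * μ ^ n * (μ + β * t) ^ (-(ν + n) - 1)) :=
        lintegral_tsum fun n => (by fun_prop : Measurable _).aemeasurable
    _ = ∑' n : ℕ, ENNReal.ofReal ((β + μ) ^ (-ν) * ((μ / (β + μ)) ^ n / (ν + n))) := by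
        refine tsum_congr fun n => ?_
        have hνn : 0 < ν + n := by positivity
        simp_rw [ENNReal.ofReal_mul (by positivity : 0 ≤ β * μ ^ n)]
        rw [lintegral_const_mul' _ _ ENNReal.ofReal_ne_top,
          lintegral_add_mul_rpow_neg_sub_one_Ioi_one hμ hβ hνn, ← ENNReal.ofReal_mul (by positivity),
          add_comm μ β, show -(ν + n) = -ν - n by ring, rpow_sub_natCast hB.ne', div_pow]
        congr 1
        field_simp
    _ = _ := by
        rw [← ENNReal.ofReal_tsum_of_nonneg (fun n => by positivity)
          ((summable_pow_div_add_of_lt_one hν (by positivity)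
          ((div_lt_one hB).2 (by linarith))).mul_left _), tsum_mul_left]

lemma integral_rpow_mul_exp_neg_mul_mul_expIntegralE1 {ν μ β : ℝ} (hν : 0 < ν) (hμ : 0 ≤ μ)
    (hβ : 0 < β) :
    ∫ x in Ioi 0, x ^ (ν - 1) * exp (-(μ * x)) * expIntegralE1 (β * x) =
      Gamma ν * ((β + μ) ^ (-ν) * ∑' n : ℕ, (μ / (β + μ)) ^ n / (ν + n)) := by
  have hnonneg : 0 ≤ᵐ[volume.restrict (Ioi 0)]
      fun x => x ^ (ν - 1) * exp (-(μ * x)) * expIntegralE1 (β * x) :=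
    (ae_restrict_iff' measurableSet_Ioi).2 <| .of_forall fun x (hx : 0 < x) =>
      mul_nonneg (by positivity) (expIntegralE1_nonneg _)
  have hmeas : Measurable fun x => x ^ (ν - 1) * exp (-(μ * x)) * expIntegralE1 (β * x) := by
    fun_prop
  rw [integral_eq_lintegral_of_nonneg_ae hnonneg hmeas.aestronglyMeasurable,
    lintegral_rpow_mul_exp_neg_mul_mul_expIntegralE1 hν hμ hβ,
    lintegral_add_mul_rpow_neg_div_Ioi_one hν hμ hβ,
    ← ENNReal.ofReal_mul (Gamma_pos_of_pos hν).le, ENNReal.toReal_ofReal]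
  positivity

theorem stmt_6 (ν μ β : ℝ) (hν : 0 < ν) (hμ : 0 < μ) (hβ : 0 < β) :
    ∫ x in Ioi (0:ℝ), x ^ (ν - 1) * Real.exp (-(μ * x)) * negEi (β * x) =
      -(Real.Gamma ν / (ν * (β + μ) ^ ν)) *
        ∑' n : ℕ, (poch 1 n * poch ν n / (poch (ν + 1) n * (n.factorial : ℝ))) *
          (μ / (β + μ)) ^ n := by
  have hcoeff (n : ℕ) : poch 1 n * poch ν n / (poch (ν + 1) n * n.factorial) * (μ / (β + μ)) ^ n =
      ν * ((μ / (β + μ)) ^ n / (ν + n)) := by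
    rw [poch_one_mul_poch_div_poch_add_one_mul_factorial hν]
    ring
  have hnegEi (x : ℝ) : negEi x = -expIntegralE1 x := rfl
  simp only [hnegEi, mul_neg, integral_neg,
    integral_rpow_mul_exp_neg_mul_mul_expIntegralE1 hν hμ.le hβ, tsum_congr hcoeff, tsum_mul_left,
    rpow_neg (by positivity : 0 ≤ β + μ)]
  field_simp
end

section
/- For all a > 0 and b > 0, ∫_0^∞ Ei(−a x) cos(b x) dx = −(1/b) arctan(b/a). -/
/-!
Write `Ei(-a x) = -∫_1^∞ e^{-a x t} / t dt` and exchange the order of integration; this is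
legitimate because `|e^{-a x t} cos(b x) / t| ≤ e^{-a x t} / t`, whose `x`-integral
`1 / (a t²)` is integrable on `(1, ∞)`. For fixed `t` the inner integral is the Laplace
transform of `cos(b x)` at `a t`, divided by `t`, namely `a / ((a t)² + b²)`, and
`∫_1^∞ a / ((a t)² + b²) dt = (π/2 - arctan(a/b)) / b = arctan(b/a) / b`.
-/

open MeasureTheory Set

open Real Filter

theorem integral_exp_neg_mul_Ioi {c : ℝ} (hc : 0 < c) :
    ∫ x in Ioi (0:ℝ), exp (-(c * x)) = c⁻¹ := by
  simpa [neg_mul, neg_div, ← div_neg] using integral_exp_mul_Ioi (neg_neg_of_pos hc) 0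

theorem exp_neg_mul_mul_cos_eq_re (c b x : ℝ) :
    exp (-(c * x)) * cos (b * x) = (Complex.exp ((-c + b * Complex.I) * x)).re := by
  rw [Complex.exp_re]
  simp

theorem integral_exp_neg_mul_mul_cos_Ioi {c : ℝ} (hc : 0 < c) (b : ℝ) :
    ∫ x in Ioi (0:ℝ), exp (-(c * x)) * cos (b * x) = c / (c ^ 2 + b ^ 2) := by
  have hre : (-c + b * Complex.I).re < 0 := by simpa using hc
  simp_rw [exp_neg_mul_mul_cos_eq_re, ← RCLike.re_to_complex]
  rw [integral_re (integrableOn_exp_mul_complex_Ioi hre 0), integral_exp_mul_complex_Ioi hre 0]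
  simp [Complex.div_re, Complex.normSq_apply, sq]

theorem integral_Ioi_one_div_mul_sq_add_sq {a b : ℝ} (ha : 0 < a) (hb : 0 < b) :
    ∫ t in Ioi (1:ℝ), a / ((a * t) ^ 2 + b ^ 2) = arctan (b / a) / b := by
  have hab : 0 < a / b := div_pos ha hb
  have hintegrand (t : ℝ) :
      a / ((a * t) ^ 2 + b ^ 2) = a / b ^ 2 * (1 + (a / b * t) ^ 2)⁻¹ := by
    field_simp
    ring
  simp_rw [hintegrand]
  rw [integral_const_mul, integral_comp_mul_left_Ioi (fun u => (1 + u ^ 2)⁻¹) 1 hab,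
    integral_Ioi_inv_one_add_sq, mul_one, ← inv_div a b, arctan_inv_of_pos hab, smul_eq_mul]
  field_simp

theorem integral_exp_neg_mul_mul_div_Ioi {a t : ℝ} (ha : 0 < a) (ht : 0 < t) :
    ∫ x in Ioi (0:ℝ), exp (-(a * x * t)) / t = a⁻¹ * t ^ (-2 : ℝ) := by
  simp_rw [mul_right_comm a _ t]
  rw [integral_div, integral_exp_neg_mul_Ioi (mul_pos ha ht), rpow_neg ht.le, rpow_two]
  field_simp

theorem integrable_exp_neg_mul_mul_div_prod {a : ℝ} (ha : 0 < a) :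
    Integrable (fun p : ℝ × ℝ => exp (-(a * p.1 * p.2)) / p.2)
      ((volume.restrict (Ioi 0)).prod (volume.restrict (Ioi 1))) := by
  have hmeas : Measurable fun p : ℝ × ℝ => exp (-(a * p.1 * p.2)) / p.2 := by fun_prop
  rw [integrable_prod_iff' hmeas.aestronglyMeasurable]
  constructor
  · refine (ae_restrict_iff' measurableSet_Ioi).2 (Eventually.of_forall fun t (ht : 1 < t) => ?_)
    simp_rw [mul_right_comm a _ t, ← neg_mul]
    exact (integrableOn_exp_mul_Ioi (by nlinarith) 0).div_const t
  · refine IntegrableOn.congr_fun ((integrableOn_Ioi_rpow_of_lt (by norm_num : (-2 : ℝ) < -1)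
      one_pos).const_mul a⁻¹) (fun t (ht : 1 < t) => ?_) measurableSet_Ioi
    have ht0 : 0 < t := one_pos.trans ht
    simp_rw [norm_of_nonneg (div_nonneg (exp_pos _).le ht0.le)]
    exact (integral_exp_neg_mul_mul_div_Ioi ha ht0).symm

theorem integral_exp_neg_mul_mul_div_mul_cos_Ioi {a t : ℝ} (ha : 0 < a) (ht : 0 < t) (b : ℝ) :
    ∫ x in Ioi (0:ℝ), exp (-(a * x * t)) / t * cos (b * x) = a / ((a * t) ^ 2 + b ^ 2) := by
  simp_rw [div_mul_eq_mul_div, mul_right_comm a _ t]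
  rw [integral_div, integral_exp_neg_mul_mul_cos_Ioi (mul_pos ha ht)]
  field_simp

theorem stmt_7 (a b : ℝ) (ha : 0 < a) (hb : 0 < b) :
    ∫ x in Ioi (0:ℝ), negEi (a * x) * Real.cos (b * x) =
      -(1 / b) * Real.arctan (b / a) := by
  have hF : Integrable (fun p : ℝ × ℝ => exp (-(a * p.1 * p.2)) / p.2 * cos (b * p.1))
      ((volume.restrict (Ioi 0)).prod (volume.restrict (Ioi 1))) :=
    (integrable_exp_neg_mul_mul_div_prod ha).mul_bdd
      (by fun_prop : Measurable _).aestronglyMeasurable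
      (Eventually.of_forall fun p => abs_cos_le_one _)
  calc ∫ x in Ioi (0:ℝ), negEi (a * x) * cos (b * x)
      = -∫ x in Ioi (0:ℝ), ∫ t in Ioi (1:ℝ), exp (-(a * x * t)) / t * cos (b * x) := by
        simp_rw [negEi, neg_mul, integral_neg, integral_mul_const]
    _ = -∫ t in Ioi (1:ℝ), ∫ x in Ioi (0:ℝ), exp (-(a * x * t)) / t * cos (b * x) := by
        rw [integral_integral_swap hF]
    _ = -∫ t in Ioi (1:ℝ), a / ((a * t) ^ 2 + b ^ 2) := by
        rw [setIntegral_congr_fun measurableSet_Ioi fun t (ht : 1 < t) =>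
          integral_exp_neg_mul_mul_div_mul_cos_Ioi ha (one_pos.trans ht) b]
    _ = -(1 / b) * arctan (b / a) := by
        rw [integral_Ioi_one_div_mul_sq_add_sq ha hb]
        ring
end

section
/- For every z > 0, ∫_0^∞ Ei(−x) J₀(2√(z x)) dx = (e^{−z} − 1)/z. -/
open MeasureTheory Set

/-- The Bessel function of the first kind of order zero. -/
noncomputable def besselJ0 (y : ℝ) : ℝ :=
  ∑' n : ℕ, (-1) ^ n * (y / 2) ^ (2 * n) / ((n.factorial : ℝ)) ^ 2

/-!
Expanding `J₀(2√(zx)) = ∑ (-zx)ⁿ / (n!)²` and integrating termwise against `e^{-tx}`, each term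
contributing `n! / tⁿ⁺¹`, gives the Laplace transform `∫₀^∞ e^{-tx} J₀(2√(zx)) dx = e^{-z/t} / t`.
Writing `Ei(-x) = -∫₁^∞ e^{-xt}/t dt` and exchanging the two integrals turns the integral into
`-∫₁^∞ e^{-z/t}/t² dt = (e^{-z} - 1)/z`. The exchange is justified by the same computation with `z`
in place of `-z`: it bounds the `x`-integral of the absolute integrand by `e^{z/t}/t²`, which is
integrable on `t > 1`.
-/

open Filter Topology Real
open scoped Nat

lemma integral_pow_mul_exp_neg_mul_Ioi (n : ℕ) {s : ℝ} (hs : 0 < s) :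
    ∫ x in Ioi (0:ℝ), x ^ n * exp (-(s * x)) = n ! / s ^ (n + 1) := by
  have h := integral_rpow_mul_exp_neg_mul_Ioi (a := n + 1) (by positivity) hs
  rw [add_sub_cancel_right, Gamma_nat_eq_factorial, ← Nat.cast_succ] at h
  simpa only [rpow_natCast, one_div, inv_pow, inv_mul_eq_div] using h

lemma hasSum_integral_exp_neg_mul_tsum_pow {a : ℕ → ℝ} {s : ℝ} (hs : 0 < s)
    (ha : Summable fun n ↦ |a n| * n ! / s ^ (n + 1)) :
    HasSum (fun n ↦ a n * n ! / s ^ (n + 1))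
      (∫ x in Ioi (0:ℝ), exp (-(s * x)) * ∑' n, a n * x ^ n) := by
  -- A function whose Bochner integral is nonzero is integrable (the junk value is `0`).
  have hint (n : ℕ) : IntegrableOn (fun x : ℝ ↦ x ^ n * exp (-(s * x))) (Ioi 0) :=
    Integrable.of_integral_ne_zero (by rw [integral_pow_mul_exp_neg_mul_Ioi n hs]; positivity)
  have hnorm (n : ℕ) : ∫ x in Ioi (0:ℝ), ‖a n * (x ^ n * exp (-(s * x)))‖
      = |a n| * n ! / s ^ (n + 1) := by
    rw [mul_div_assoc, ← integral_pow_mul_exp_neg_mul_Ioi n hs, ← integral_const_mul]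
    refine setIntegral_congr_fun measurableSet_Ioi fun x (hx : 0 < x) ↦ ?_
    rw [Real.norm_eq_abs, abs_mul, abs_of_nonneg (a := x ^ n * _) (by positivity)]
  have h := hasSum_integral_of_summable_integral_norm (fun n ↦ (hint n).const_mul (a n))
    (by simpa only [hnorm] using ha)
  simp only [integral_const_mul, integral_pow_mul_exp_neg_mul_Ioi _ hs, ← mul_div_assoc] at h
  have hsum (x : ℝ) :
      exp (-(s * x)) * ∑' n, a n * x ^ n = ∑' n, a n * (x ^ n * exp (-(s * x))) := by
    rw [← tsum_mul_left]
    exact tsum_congr fun n ↦ by ring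
  simpa only [hsum] using h

/-- `besselSeries w = I₀(2√w)` for `w ≥ 0` and `J₀(2√(-w))` for `w ≤ 0`. -/
noncomputable def besselSeries (w : ℝ) : ℝ := ∑' n : ℕ, w ^ n / (n ! : ℝ) ^ 2

lemma summable_besselSeries (w : ℝ) : Summable fun n : ℕ ↦ w ^ n / (n ! : ℝ) ^ 2 := by
  refine (summable_pow_div_factorial |w|).of_norm_bounded fun n ↦ ?_
  have h1 : (1 : ℝ) ≤ n ! := mod_cast n.factorial_pos
  rw [norm_div, norm_pow, Real.norm_eq_abs, norm_of_nonneg (by positivity)]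
  exact div_le_div_of_nonneg_left (by positivity) (by positivity) (by nlinarith)

lemma abs_besselSeries_le (w : ℝ) : |besselSeries w| ≤ besselSeries |w| := by
  have h := norm_tsum_le_tsum_norm (summable_besselSeries w).norm
  simpa only [besselSeries, norm_div, norm_pow, Real.norm_eq_abs, Nat.abs_cast] using h

@[fun_prop]
lemma measurable_besselSeries : Measurable besselSeries :=
  measurable_of_tendsto_metrizable (fun N ↦ by fun_prop) <|
    tendsto_pi_nhds.2 fun w ↦ (summable_besselSeries w).hasSum.tendsto_sum_nat

lemma besselJ0_two_mul_sqrt {w : ℝ} (hw : 0 ≤ w) :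
    besselJ0 (2 * √w) = besselSeries (-w) := by
  refine tsum_congr fun n ↦ ?_
  rw [mul_div_cancel_left₀ _ two_ne_zero, pow_mul, sq_sqrt hw, neg_pow w]

lemma integral_exp_neg_mul_besselSeries (c : ℝ) {s : ℝ} (hs : 0 < s) :
    ∫ x in Ioi (0:ℝ), exp (-(s * x)) * besselSeries (c * x) = exp (c / s) / s := by
  have hterm (b : ℝ) (n : ℕ) :
      b ^ n / (n ! : ℝ) ^ 2 * n ! / s ^ (n + 1) = (b / s) ^ n / n ! * s⁻¹ := by
    rw [div_pow]
    field_simp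
    ring
  have hexp (b : ℝ) :
      HasSum (fun n ↦ b ^ n / (n ! : ℝ) ^ 2 * n ! / s ^ (n + 1)) (exp (b / s) / s) := by
    simp_rw [hterm, div_eq_mul_inv (exp _), exp_eq_exp_ℝ]
    exact (NormedSpace.expSeries_div_hasSum_exp (b / s)).mul_right s⁻¹
  have h := hasSum_integral_exp_neg_mul_tsum_pow (a := fun n ↦ c ^ n / (n ! : ℝ) ^ 2) hs
    (by simpa only [abs_div, abs_pow, Nat.abs_cast] using (hexp |c|).summable)
  rw [← h.unique (hexp c)]
  refine setIntegral_congr_fun measurableSet_Ioi fun x _ ↦ ?_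
  simp only [besselSeries, mul_pow, mul_div_right_comm]

lemma integrableOn_exp_neg_mul_besselSeries (c : ℝ) {s : ℝ} (hs : 0 < s) :
    IntegrableOn (fun x ↦ exp (-(s * x)) * besselSeries (c * x)) (Ioi 0) :=
  Integrable.of_integral_ne_zero (by rw [integral_exp_neg_mul_besselSeries c hs]; positivity)

lemma hasDerivAt_neg_exp_div_div {a : ℝ} (ha : a ≠ 0) {t : ℝ} (ht : t ≠ 0) :
    HasDerivAt (fun t ↦ -exp (a / t) / a) (exp (a / t) / t ^ 2) t := by
  have h : HasDerivAt (fun t ↦ -exp (a / t) / a)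
      (-(exp (a / t) * (a * -(t ^ 2)⁻¹)) / a) t := by
    simpa only [div_eq_mul_inv a] using
      (((hasDerivAt_inv ht).const_mul a).exp.fun_neg).div_const a
  convert h using 1
  field_simp

lemma tendsto_neg_exp_div_div_atTop (a : ℝ) :
    Tendsto (fun t ↦ -exp (a / t) / a) atTop (𝓝 (-1 / a)) := by
  have h := ((continuous_exp.tendsto 0).comp
    ((tendsto_const_nhds (x := a)).div_atTop tendsto_id)).neg.div_const a
  simpa only [Function.comp_def, id, exp_zero] using h

lemma integrableOn_exp_div_div_sq {a : ℝ} (ha : a ≠ 0) :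
    IntegrableOn (fun t ↦ exp (a / t) / t ^ 2) (Ioi 1) :=
  integrableOn_Ioi_deriv_of_nonneg'
    (fun t (ht : 1 ≤ t) ↦ hasDerivAt_neg_exp_div_div ha (by positivity))
    (fun t _ ↦ by positivity) (tendsto_neg_exp_div_div_atTop a)

lemma integral_exp_div_div_sq {a : ℝ} (ha : a ≠ 0) :
    ∫ t in Ioi 1, exp (a / t) / t ^ 2 = (exp a - 1) / a := by
  rw [integral_Ioi_of_hasDerivAt_of_nonneg'
    (fun t (ht : 1 ≤ t) ↦ hasDerivAt_neg_exp_div_div ha (by positivity))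
    (fun t _ ↦ by positivity) (tendsto_neg_exp_div_div_atTop a), div_one]
  ring

lemma exp_neg_mul_div_mul_eq_inv_mul (x t y : ℝ) :
    exp (-(x * t)) / t * y = t⁻¹ * (exp (-(t * x)) * y) := by
  rw [mul_comm x t]
  ring

lemma integral_norm_exp_neg_mul_div_mul_besselSeries_le (c : ℝ) {t : ℝ} (ht : 0 < t) :
    ∫ x in Ioi (0:ℝ), ‖exp (-(x * t)) / t * besselSeries (c * x)‖ ≤ exp (|c| / t) / t ^ 2 := by
  have hbound : ∀ x ∈ Ioi (0:ℝ), ‖exp (-(x * t)) / t * besselSeries (c * x)‖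
      ≤ t⁻¹ * (exp (-(t * x)) * besselSeries (|c| * x)) := fun x (hx : 0 < x) ↦ by
    rw [exp_neg_mul_div_mul_eq_inv_mul, norm_mul, norm_mul, Real.norm_of_nonneg (by positivity),
      Real.norm_of_nonneg (by positivity), Real.norm_eq_abs]
    have h := abs_besselSeries_le (c * x)
    rw [abs_mul, abs_of_pos hx] at h
    gcongr
  calc ∫ x in Ioi (0:ℝ), ‖exp (-(x * t)) / t * besselSeries (c * x)‖
      ≤ ∫ x in Ioi (0:ℝ), t⁻¹ * (exp (-(t * x)) * besselSeries (|c| * x)) :=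
        integral_mono_of_nonneg (.of_forall fun _ ↦ norm_nonneg _)
          ((integrableOn_exp_neg_mul_besselSeries |c| ht).const_mul t⁻¹)
          ((ae_restrict_iff' measurableSet_Ioi).2 (.of_forall hbound))
    _ = exp (|c| / t) / t ^ 2 := by
        rw [integral_const_mul, integral_exp_neg_mul_besselSeries _ ht]
        field_simp

lemma integrable_uncurry_exp_neg_mul_div_mul_besselSeries {c : ℝ} (hc : c ≠ 0) :
    Integrable (Function.uncurry fun x t ↦ exp (-(x * t)) / t * besselSeries (c * x))
      ((volume.restrict (Ioi (0:ℝ))).prod (volume.restrict (Ioi (1:ℝ)))) := by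
  have hmeas : Measurable
      (Function.uncurry fun x t : ℝ ↦ exp (-(x * t)) / t * besselSeries (c * x)) := by
    fun_prop
  rw [integrable_prod_iff' hmeas.aestronglyMeasurable]
  constructor
  · filter_upwards [ae_restrict_mem measurableSet_Ioi] with t (ht : 1 < t)
    simpa only [Function.uncurry_apply_pair, exp_neg_mul_div_mul_eq_inv_mul] using
      (integrableOn_exp_neg_mul_besselSeries c (by linarith)).const_mul t⁻¹
  refine (integrableOn_exp_div_div_sq (abs_ne_zero.2 hc)).mono'
    hmeas.norm.stronglyMeasurable.integral_prod_left'.aestronglyMeasurable ?_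
  filter_upwards [ae_restrict_mem measurableSet_Ioi] with t (ht : 1 < t)
  rw [Real.norm_of_nonneg (integral_nonneg fun _ ↦ norm_nonneg _)]
  exact integral_norm_exp_neg_mul_div_mul_besselSeries_le c (by linarith)

theorem stmt_8 (z : ℝ) (hz : 0 < z) :
    ∫ x in Ioi (0:ℝ), negEi x * besselJ0 (2 * Real.sqrt (z * x)) =
      (Real.exp (-z) - 1) / z := by
  have hc : -z ≠ 0 := neg_ne_zero.2 hz.ne'
  have hintegrand : ∀ x ∈ Ioi (0:ℝ), negEi x * besselJ0 (2 * √(z * x))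
      = -∫ t in Ioi 1, exp (-(x * t)) / t * besselSeries (-z * x) := fun x (hx : 0 < x) ↦ by
    rw [besselJ0_two_mul_sqrt (by positivity), negEi, neg_mul, integral_mul_const, neg_mul]
  have hlaplace : ∀ t ∈ Ioi (1:ℝ),
      ∫ x in Ioi 0, exp (-(x * t)) / t * besselSeries (-z * x) = exp (-z / t) / t ^ 2 :=
    fun t (ht : 1 < t) ↦ by
      simp_rw [exp_neg_mul_div_mul_eq_inv_mul]
      rw [integral_const_mul, integral_exp_neg_mul_besselSeries _ (by linarith)]
      field_simp
  rw [setIntegral_congr_fun measurableSet_Ioi hintegrand, integral_neg,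
    integral_integral_swap (integrable_uncurry_exp_neg_mul_div_mul_besselSeries hc),
    setIntegral_congr_fun measurableSet_Ioi hlaplace, integral_exp_div_div_sq hc]
  field_simp
end

section
/- For all a₁ > 0 and a₂ > 0, ∫_0^∞ Ei(−a₁ x) Ei(−a₂ x) dx = (1/a₁ + 1/a₂) ln(a₁+a₂) − (ln a₁)/a₂ − (ln a₂)/a₁. -/
/-!
Since `d/dy Ei(-a y) = e^{-a y} / y`, the function `negEiProdPrimitive a₁ a₂` is an explicit
antiderivative of the nonnegative integrand on `(0, ∞)`, its summands grouped so that each has an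
evident limit at `0⁺`. It vanishes at `∞` because `|Ei(-x)| ≤ e^{-x} / x`, and its limit at `0⁺`
comes from `Ei(-x) = log x + C + o(1)`: the logarithmic singularities cancel in the differences
`Ei(-b y) - Ei(-(a + b) y) → log (b / (a + b))`, while the remaining summands are `O(y log² y)`
or `O(y log y)`.
-/

open MeasureTheory Set

open Real Filter Topology

lemma integral_Ioi_of_hasDerivAt_of_nonneg_of_tendsto_nhdsGT {g g' : ℝ → ℝ} {a m l : ℝ}
    (hm : Tendsto g (𝓝[>] a) (𝓝 m)) (hderiv : ∀ x ∈ Ioi a, HasDerivAt g (g' x) x)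
    (hg' : ∀ x ∈ Ioi a, 0 ≤ g' x) (hl : Tendsto g atTop (𝓝 l)) :
    ∫ x in Ioi a, g' x = l - m := by
  classical
  have hcont : ContinuousWithinAt (Function.update g a m) (Ici a) a := by
    rwa [continuousWithinAt_update_same, Ici_sdiff_left]
  have hderiv' : ∀ x ∈ Ioi a, HasDerivAt (Function.update g a m) (g' x) x := fun x hx =>
    (hderiv x hx).congr_of_eventuallyEq <| (eventually_ne_nhds (ne_of_gt hx)).mono
      fun y hy => Function.update_of_ne hy _ _
  have hl' : Tendsto (Function.update g a m) atTop (𝓝 l) :=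
    hl.congr' <| (eventually_ne_atTop a).mono fun y hy => (Function.update_of_ne hy _ _).symm
  simpa using integral_Ioi_of_hasDerivAt_of_nonneg hcont hderiv' hg' hl'

lemma integrableOn_exp_neg_div_Ioi {x : ℝ} (hx : 0 < x) :
    IntegrableOn (fun u => exp (-u) / u) (Ioi x) := by
  refine ((exp_neg_integrableOn_Ioi x zero_lt_one).const_mul x⁻¹).mono' ?_ ?_
  · exact ((measurable_exp.comp measurable_neg).div measurable_id).aestronglyMeasurable
  · filter_upwards [ae_restrict_mem measurableSet_Ioi] with u hu
    rw [norm_of_nonneg (by have := hx.trans hu; positivity), neg_one_mul, div_eq_inv_mul]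
    gcongr
    exact hu.le

lemma negEi_eq_neg_integral_Ioi {x : ℝ} (hx : 0 < x) :
    negEi x = -∫ u in Ioi x, exp (-u) / u := by
  have h := integral_comp_mul_left_Ioi (fun u => x * (exp (-u) / u)) 1 hx
  simp only [smul_eq_mul, mul_one, ← integral_const_mul, inv_mul_cancel_left₀ hx.ne'] at h
  rw [negEi, ← h]
  congr 1
  refine setIntegral_congr_fun measurableSet_Ioi fun t ht => ?_
  have : (0:ℝ) < t := zero_lt_one.trans ht
  field_simp

lemma negEi_nonpos (x : ℝ) : negEi x ≤ 0 :=
  neg_nonpos.mpr <| setIntegral_nonneg measurableSet_Ioi fun t ht => by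
    have : (0:ℝ) < t := zero_lt_one.trans ht
    positivity

lemma neg_exp_neg_div_le_negEi {x : ℝ} (hx : 0 < x) : -(exp (-x) / x) ≤ negEi x := by
  rw [negEi_eq_neg_integral_Ioi hx, neg_le_neg_iff]
  calc ∫ u in Ioi x, exp (-u) / u
      ≤ ∫ u in Ioi x, x⁻¹ * exp (-u) :=
        setIntegral_mono_on (integrableOn_exp_neg_div_Ioi hx)
          (by simpa [IntegrableOn] using (exp_neg_integrableOn_Ioi x zero_lt_one).const_mul x⁻¹)
          measurableSet_Ioi fun u hu => by
            rw [div_eq_inv_mul]; gcongr; exact hu.le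
    _ = exp (-x) / x := by rw [integral_const_mul, integral_exp_neg_Ioi, inv_mul_eq_div]

lemma abs_negEi_le {x : ℝ} (hx : 0 < x) : |negEi x| ≤ exp (-x) / x :=
  abs_le.mpr ⟨neg_exp_neg_div_le_negEi hx, (negEi_nonpos x).trans (by positivity)⟩

lemma negEi_eq_intervalIntegral_sub {x : ℝ} (hx : 0 < x) :
    negEi x = (∫ u in (1:ℝ)..x, exp (-u) / u) - ∫ u in Ioi 1, exp (-u) / u := by
  rw [negEi_eq_neg_integral_Ioi hx, ← intervalIntegral.integral_interval_add_Ioi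
    (integrableOn_exp_neg_div_Ioi one_pos) (integrableOn_exp_neg_div_Ioi hx)]
  ring

lemma hasDerivAt_negEi {x : ℝ} (hx : 0 < x) : HasDerivAt negEi (exp (-x) / x) x := by
  have hcont : ContinuousOn (fun u => exp (-u) / u) (Ioi 0) := fun u hu =>
    (((continuous_exp.comp continuous_neg).continuousAt).div continuousAt_id
      (ne_of_gt hu)).continuousWithinAt
  have hint : IntervalIntegrable (fun u => exp (-u) / u) volume 1 x :=
    (hcont.mono fun u hu => lt_of_lt_of_le (lt_min one_pos hx) hu.1).intervalIntegrable
  have h := intervalIntegral.integral_hasDerivAt_right hint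
    (hcont.stronglyMeasurableAtFilter isOpen_Ioi x hx) (hcont.continuousAt (Ioi_mem_nhds hx))
  refine (h.sub_const (∫ u in Ioi 1, exp (-u) / u)).congr_of_eventuallyEq ?_
  filter_upwards [Ioi_mem_nhds hx] with y hy
  exact negEi_eq_intervalIntegral_sub hy

lemma tendsto_negEi_atTop : Tendsto negEi atTop (𝓝 0) := by
  have h : Tendsto (fun x => exp (-x) * x⁻¹) atTop (𝓝 0) := by
    simpa using tendsto_exp_neg_atTop_nhds_zero.mul tendsto_inv_atTop_zero
  refine squeeze_zero_norm' ?_ h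
  filter_upwards [eventually_gt_atTop 0] with x hx
  exact abs_negEi_le hx

lemma tendsto_mul_negEi_mul_atTop {a : ℝ} (ha : 0 < a) :
    Tendsto (fun y => y * negEi (a * y)) atTop (𝓝 0) := by
  have hexp : Tendsto (fun y => exp (-(a * y)) / a) atTop (𝓝 0) := by
    simpa using (tendsto_exp_neg_atTop_nhds_zero.comp
      (tendsto_id.const_mul_atTop ha)).div_const a
  refine squeeze_zero_norm' ?_ hexp
  filter_upwards [eventually_gt_atTop 0] with y hy
  calc ‖y * negEi (a * y)‖ = y * |negEi (a * y)| := by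
        rw [norm_mul, norm_of_nonneg hy.le, Real.norm_eq_abs]
    _ ≤ y * (exp (-(a * y)) / (a * y)) := by gcongr; exact abs_negEi_le (by positivity)
    _ = exp (-(a * y)) / a := by field_simp

lemma abs_exp_neg_sub_one_le {u : ℝ} (hu : 0 ≤ u) : |exp (-u) - 1| ≤ u := by
  rw [abs_sub_comm, abs_of_nonneg (sub_nonneg.mpr (exp_le_one_iff.mpr (neg_nonpos.mpr hu)))]
  linarith [add_one_le_exp (-u)]

lemma exists_tendsto_negEi_sub_log :
    ∃ C, Tendsto (fun x => negEi x - log x) (𝓝[>] 0) (𝓝 C) := by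
  -- `negEi - log` has the derivative `φ`, which is bounded on `(0, 1]`.
  set φ : ℝ → ℝ := fun u => (exp (-u) - 1) / u
  have hφ : IntegrableOn φ (Icc 0 1) := by
    refine (integrable_const (1 : ℝ)).mono' ?_ ?_
    · exact (((measurable_exp.comp measurable_neg).sub measurable_const).div
        measurable_id).aestronglyMeasurable
    · filter_upwards [ae_restrict_mem measurableSet_Icc] with u hu
      rw [norm_div, Real.norm_eq_abs, Real.norm_eq_abs, abs_of_nonneg hu.1]
      exact div_le_one_of_le₀ (abs_exp_neg_sub_one_le hu.1) hu.1
  have hftc : ∀ x ∈ Ioc (0:ℝ) 1,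
      negEi x - log x = negEi 1 - log 1 - ∫ u in x..1, φ u := by
    intro x hx
    have hderiv : ∀ u ∈ uIcc x 1, HasDerivAt (fun u => negEi u - log u) (φ u) u := by
      intro u hu
      rw [uIcc_of_le hx.2] at hu
      have hu0 : 0 < u := hx.1.trans_le hu.1
      refine ((hasDerivAt_negEi hu0).sub (hasDerivAt_log hu0.ne')).congr_deriv ?_
      simp only [φ, sub_div, one_div]
    have hint : IntervalIntegrable φ volume x 1 :=
      (hφ.mono_set (by rw [uIcc_of_le hx.2]; exact Icc_subset_Icc_left hx.1.le)).intervalIntegrable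
    rw [intervalIntegral.integral_eq_sub_of_hasDerivAt hderiv hint]
    ring
  have hprim : Tendsto (fun x => ∫ u in x..1, φ u) (𝓝[>] 0) (𝓝 (∫ u in (0:ℝ)..1, φ u)) := by
    rw [← uIcc_of_le zero_le_one] at hφ
    refine ((intervalIntegral.continuousOn_primitive_interval_left hφ) 0
      left_mem_uIcc).mono_of_mem_nhdsWithin ?_
    rw [uIcc_of_le zero_le_one]
    exact Icc_mem_nhdsGT one_pos
  refine ⟨_, ((tendsto_const_nhds (x := negEi 1 - log 1)).sub hprim).congr' ?_⟩
  filter_upwards [Ioc_mem_nhdsGT one_pos] with x hx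
  exact (hftc x hx).symm

lemma tendsto_mul_log_nhdsGT_zero : Tendsto (fun y => y * log y) (𝓝[>] 0) (𝓝 0) := by
  simpa using (continuous_mul_log.tendsto 0).mono_left nhdsWithin_le_nhds

lemma tendsto_mul_log_mul_log_nhdsGT_zero :
    Tendsto (fun y => y * log y * log y) (𝓝[>] 0) (𝓝 0) := by
  have h := tendsto_log_mul_rpow_nhdsGT_zero (by norm_num : (0:ℝ) < 1 / 2)
  have h2 := h.mul h
  rw [mul_zero] at h2
  refine h2.congr' ?_
  filter_upwards [self_mem_nhdsWithin] with y hy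
  have hsqrt : y ^ (1 / 2 : ℝ) * y ^ (1 / 2 : ℝ) = y := by
    rw [← rpow_add hy]; norm_num
  linear_combination (log y * log y) * hsqrt

section LogarithmicSingularity

variable {f g : ℝ → ℝ} {c d : ℝ}

lemma tendsto_mul_of_tendsto_sub_log (hf : Tendsto (fun y => f y - log y) (𝓝[>] 0) (𝓝 c)) :
    Tendsto (fun y => y * f y) (𝓝[>] 0) (𝓝 0) := by
  have hid : Tendsto (fun y : ℝ => y) (𝓝[>] 0) (𝓝 0) := nhdsWithin_le_nhds
  simpa using (tendsto_mul_log_nhdsGT_zero.add (hid.mul hf)).congr fun y => by ring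

lemma tendsto_mul_of_hasDerivAt_of_tendsto_sub_log {h : ℝ → ℝ} {h' : ℝ} (hh : HasDerivAt h h' 0)
    (h0 : h 0 = 0) (hf : Tendsto (fun y => f y - log y) (𝓝[>] 0) (𝓝 c)) :
    Tendsto (fun y => h y * f y) (𝓝[>] 0) (𝓝 0) := by
  have hslope := hh.tendsto_slope_zero_right
  simp only [zero_add, h0, sub_zero, smul_eq_mul] at hslope
  have hprod := hslope.mul (tendsto_mul_of_tendsto_sub_log hf)
  rw [mul_zero] at hprod
  refine hprod.congr' ?_
  filter_upwards [self_mem_nhdsWithin] with y (hy : 0 < y)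
  field_simp

lemma tendsto_mul_mul_of_tendsto_sub_log (hf : Tendsto (fun y => f y - log y) (𝓝[>] 0) (𝓝 c))
    (hg : Tendsto (fun y => g y - log y) (𝓝[>] 0) (𝓝 d)) :
    Tendsto (fun y => y * f y * g y) (𝓝[>] 0) (𝓝 0) := by
  have hid : Tendsto (fun y : ℝ => y) (𝓝[>] 0) (𝓝 0) := nhdsWithin_le_nhds
  have h := (tendsto_mul_log_mul_log_nhdsGT_zero.add
    (tendsto_mul_log_nhdsGT_zero.mul (hf.add hg))).add (hid.mul (hf.mul hg))
  simpa using h.congr fun y => by ring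

end LogarithmicSingularity

lemma tendsto_negEi_mul_sub_log {C : ℝ}
    (hC : Tendsto (fun x => negEi x - log x) (𝓝[>] 0) (𝓝 C)) {a : ℝ} (ha : 0 < a) :
    Tendsto (fun y => negEi (a * y) - log y) (𝓝[>] 0) (𝓝 (C + log a)) := by
  have hmul : Tendsto (fun y => a * y) (𝓝[>] 0) (𝓝[>] 0) :=
    tendsto_nhdsWithin_of_tendsto_nhds_of_eventually_within _
      (by simpa using ((continuous_const_mul a).tendsto 0).mono_left nhdsWithin_le_nhds)
      (eventually_nhdsWithin_of_forall fun y hy => mul_pos ha hy)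
  refine ((hC.comp hmul).add_const (log a)).congr' ?_
  filter_upwards [self_mem_nhdsWithin] with y hy
  simp only [Function.comp_apply, log_mul ha.ne' (ne_of_gt hy)]
  ring

lemma hasDerivAt_negEi_mul {a y : ℝ} (ha : 0 < a) (hy : 0 < y) :
    HasDerivAt (fun y => negEi (a * y)) (exp (-(a * y)) / y) y := by
  have h := (hasDerivAt_negEi (mul_pos ha hy)).comp y ((hasDerivAt_id y).const_mul a)
  refine h.congr_deriv ?_
  field_simp

noncomputable def negEiProdPrimitive (a b y : ℝ) : ℝ :=
  y * negEi (a * y) * negEi (b * y)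
    + (exp (-(a * y)) - 1) / a * negEi (b * y) + (exp (-(b * y)) - 1) / b * negEi (a * y)
    + (negEi (b * y) - negEi ((a + b) * y)) / a + (negEi (a * y) - negEi ((a + b) * y)) / b

lemma hasDerivAt_exp_neg_mul_sub_one_div (c y : ℝ) :
    HasDerivAt (fun y => (exp (-(c * y)) - 1) / c) (-c * exp (-(c * y)) / c) y := by
  have h := ((((hasDerivAt_id y).const_mul c).neg).exp.sub_const 1).div_const c
  simpa [mul_comm] using h

section Primitive

variable {a b : ℝ}

lemma hasDerivAt_negEiProdPrimitive (ha : 0 < a) (hb : 0 < b) {y : ℝ} (hy : 0 < y) :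
    HasDerivAt (negEiProdPrimitive a b) (negEi (a * y) * negEi (b * y)) y := by
  have hA := hasDerivAt_negEi_mul ha hy
  have hB := hasDerivAt_negEi_mul hb hy
  have hAB := hasDerivAt_negEi_mul (add_pos ha hb) hy
  have h := (((((hasDerivAt_id y).mul hA).mul hB).add
    ((hasDerivAt_exp_neg_mul_sub_one_div a y).mul hB)).add
    ((hasDerivAt_exp_neg_mul_sub_one_div b y).mul hA)).add ((hB.sub hAB).div_const a)
    |>.add ((hA.sub hAB).div_const b)
  refine h.congr_deriv ?_
  have hsplit : exp (-((a + b) * y)) = exp (-(a * y)) * exp (-(b * y)) := by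
    rw [← exp_add]; ring_nf
  simp only [id_eq, Pi.mul_apply, hsplit]
  field_simp
  ring

lemma tendsto_negEiProdPrimitive_atTop (ha : 0 < a) (hb : 0 < b) :
    Tendsto (negEiProdPrimitive a b) atTop (𝓝 0) := by
  have hexp : ∀ {c : ℝ}, 0 < c → Tendsto (fun y => (exp (-(c * y)) - 1) / c) atTop (𝓝 (-1 / c)) :=
    fun hc => by
      simpa using ((tendsto_exp_neg_atTop_nhds_zero.comp
        (tendsto_id.const_mul_atTop hc)).sub_const 1).div_const _
  have hA := tendsto_negEi_atTop.comp (tendsto_id.const_mul_atTop ha)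
  have hB := tendsto_negEi_atTop.comp (tendsto_id.const_mul_atTop hb)
  have hAB := tendsto_negEi_atTop.comp (tendsto_id.const_mul_atTop (add_pos ha hb))
  have h := (((((tendsto_mul_negEi_mul_atTop ha).mul hB).add ((hexp ha).mul hB)).add
    ((hexp hb).mul hA)).add ((hB.sub hAB).div_const a)).add ((hA.sub hAB).div_const b)
  simp only [mul_zero, sub_self, zero_div, add_zero] at h
  exact h

lemma tendsto_negEiProdPrimitive_nhdsGT_zero (ha : 0 < a) (hb : 0 < b) :
    Tendsto (negEiProdPrimitive a b) (𝓝[>] 0)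
      (𝓝 ((log b - log (a + b)) / a + (log a - log (a + b)) / b)) := by
  obtain ⟨C, hC⟩ := exists_tendsto_negEi_sub_log
  have hA := tendsto_negEi_mul_sub_log hC ha
  have hB := tendsto_negEi_mul_sub_log hC hb
  have hAB := tendsto_negEi_mul_sub_log hC (add_pos ha hb)
  have h := ((((tendsto_mul_mul_of_tendsto_sub_log hA hB).add
    (tendsto_mul_of_hasDerivAt_of_tendsto_sub_log (hasDerivAt_exp_neg_mul_sub_one_div a 0)
      (by simp) hB)).add
    (tendsto_mul_of_hasDerivAt_of_tendsto_sub_log (hasDerivAt_exp_neg_mul_sub_one_div b 0)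
      (by simp) hA)).add ((hB.sub hAB).div_const a)).add ((hA.sub hAB).div_const b)
  convert h using 1
  · ext y
    simp only [negEiProdPrimitive]
    ring
  · congr 1
    ring

end Primitive

theorem stmt_9 (a₁ a₂ : ℝ) (ha₁ : 0 < a₁) (ha₂ : 0 < a₂) :
    ∫ x in Ioi (0:ℝ), negEi (a₁ * x) * negEi (a₂ * x) =
      (1 / a₁ + 1 / a₂) * Real.log (a₁ + a₂) - Real.log a₁ / a₂ - Real.log a₂ / a₁ := by
  rw [integral_Ioi_of_hasDerivAt_of_nonneg_of_tendsto_nhdsGT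
    (tendsto_negEiProdPrimitive_nhdsGT_zero ha₁ ha₂)
    (fun x hx => hasDerivAt_negEiProdPrimitive ha₁ ha₂ hx)
    (fun x _ => mul_nonneg_of_nonpos_of_nonpos (negEi_nonpos _) (negEi_nonpos _))
    (tendsto_negEiProdPrimitive_atTop ha₁ ha₂)]
  ring
end

section
/- For every β > 0 and every s > 0, ∫_0^∞ x^{s−1} K₀(βx) dx = 2^{s−2} β^{−s} Γ(s/2)². -/
/-!
Writing `1/√(t²+1) = (2/√π) ∫₀^∞ exp(-(t²+1)w²) dw` and exchanging the order of integration
on `[0, T]`, the inner cosine transform of a Gaussian tends to `√π/(2w) · exp(-x²/(4w²))` as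
`T → ∞`. Dominated convergence applies because integration by parts bounds every truncated
cosine integral of a decreasing Gaussian by `1/x`, uniformly in `w`. This gives
`K₀(x) = ∫₀^∞ exp(-w² - x²/(4w²)) / w dw`, and by Tonelli the Mellin transform of this
positive double integral factors into two Gaussian Mellin integrals, each `Γ(s/2)/2`.
-/

open MeasureTheory Filter Set Real

theorem integral_cos_mul_exp_neg_mul_sq {b : ℝ} (hb : 0 < b) (x : ℝ) :
    ∫ t : ℝ, cos (x * t) * exp (-b * t ^ 2) = √(π / b) * exp (-x ^ 2 / (4 * b)) := by
  have hb' : 0 < (b : ℂ).re := by simpa using hb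
  have hint :
      Integrable fun t : ℝ => Complex.exp (Complex.I * x * t) * Complex.exp (-b * t ^ 2) := by
    simpa [← Complex.exp_add, add_comm] using integrable_cexp_quadratic hb' (Complex.I * x) 0
  have h := congrArg Complex.re (fourierIntegral_gaussian hb' x)
  rw [← RCLike.re_to_complex, ← integral_re hint] at h
  convert h using 1
  · congr 1 with t
    rw [show Complex.I * x * t = ((x * t : ℝ) : ℂ) * Complex.I by push_cast; ring,
      show -(b : ℂ) * t ^ 2 = ((-b * t ^ 2 : ℝ) : ℂ) by push_cast; ring, ← Complex.ofReal_exp,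
      RCLike.re_to_complex, Complex.re_mul_ofReal, Complex.exp_ofReal_mul_I_re]
  · rw [show (π : ℂ) / b = ((π / b : ℝ) : ℂ) by push_cast; ring,
      show -(x : ℂ) ^ 2 / (4 * b) = ((-x ^ 2 / (4 * b) : ℝ) : ℂ) by push_cast; ring,
      show (1 / 2 : ℂ) = ((1 / 2 : ℝ) : ℂ) by norm_num, ← Complex.ofReal_cpow (by positivity),
      ← Complex.ofReal_exp, ← Complex.ofReal_mul, Complex.ofReal_re, Real.sqrt_eq_rpow]

theorem integral_Ioi_cos_mul_exp_neg_mul_sq {b : ℝ} (hb : 0 < b) (x : ℝ) :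
    ∫ t in Ioi 0, cos (x * t) * exp (-b * t ^ 2) = √(π / b) / 2 * exp (-x ^ 2 / (4 * b)) := by
  have h := integral_comp_abs (f := fun t => cos (x * t) * exp (-b * t ^ 2))
  have heven (t : ℝ) : cos (x * |t|) * exp (-b * |t| ^ 2) = cos (x * t) * exp (-b * t ^ 2) := by
    rcases abs_choice t with ht | ht <;> simp [ht]
  simp only [heven, integral_cos_mul_exp_neg_mul_sq hb] at h
  linarith

theorem abs_intervalIntegral_cos_mul_le {g g' : ℝ → ℝ} {x T : ℝ} (hx : 0 < x) (hT : 0 ≤ T)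
    (hg : ∀ t ∈ Icc 0 T, HasDerivAt g (g' t) t) (hg' : IntervalIntegrable g' volume 0 T)
    (hg'_nonpos : ∀ t ∈ Icc 0 T, g' t ≤ 0) (hgT : 0 ≤ g T) :
    |∫ t in 0..T, cos (x * t) * g t| ≤ g 0 / x := by
  rw [← uIcc_of_le hT] at hg
  have hsin (t : ℝ) : HasDerivAt (fun t => sin (x * t) / x) (cos (x * t)) t := by
    simpa [hx.ne'] using (((hasDerivAt_id t).const_mul x).sin).div_const x
  have ibp := intervalIntegral.integral_mul_deriv_eq_deriv_mul hg (fun t _ => hsin t) hg'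
    ((by fun_prop : Continuous fun t => cos (x * t)).intervalIntegrable _ _)
  have hftc := intervalIntegral.integral_eq_sub_of_hasDerivAt hg hg'
  have hrest : |∫ t in 0..T, g' t * (sin (x * t) / x)| ≤ (g 0 - g T) / x := by
    calc |∫ t in 0..T, g' t * (sin (x * t) / x)|
        ≤ ∫ t in 0..T, -g' t / x := by
          rw [← Real.norm_eq_abs]
          refine intervalIntegral.norm_integral_le_of_norm_le hT (ae_of_all _ fun t ht => ?_)
            (hg'.neg.div_const x)
          rw [norm_mul, norm_div, Real.norm_of_nonpos (hg'_nonpos t (Ioc_subset_Icc_self ht)),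
            Real.norm_of_nonneg hx.le, mul_div_assoc']
          refine div_le_div_of_nonneg_right (mul_le_of_le_one_right ?_ (abs_sin_le_one _)) hx.le
          linarith [hg'_nonpos t (Ioc_subset_Icc_self ht)]
      _ = (g 0 - g T) / x := by
        rw [intervalIntegral.integral_div, intervalIntegral.integral_neg, hftc, neg_sub]
  have hbdry : |g T * (sin (x * T) / x)| ≤ g T / x := by
    rw [abs_mul, abs_div, abs_of_nonneg hgT, abs_of_pos hx, mul_div_assoc']
    gcongr
    exact mul_le_of_le_one_right hgT (abs_sin_le_one _)
  simp_rw [mul_comm (cos _)]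
  rw [ibp]
  simp only [mul_zero, sin_zero, zero_div, sub_zero]
  calc _ ≤ |g T * (sin (x * T) / x)| + |∫ t in 0..T, g' t * (sin (x * t) / x)| := abs_sub _ _
    _ ≤ g T / x + (g 0 - g T) / x := add_le_add hbdry hrest
    _ = g 0 / x := by ring

theorem inv_sqrt_eq_integral_exp_neg_mul_sq {a : ℝ} (ha : 0 < a) :
    (√a)⁻¹ = 2 / √π * ∫ w in Ioi 0, exp (-a * w ^ 2) := by
  rw [integral_gaussian_Ioi, sqrt_div pi_pos.le]
  field_simp

theorem intervalIntegral_cos_div_sqrt_eq (x T : ℝ) :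
    ∫ t in 0..T, cos (x * t) / √(t ^ 2 + 1) =
      ∫ w in Ioi 0, 2 / √π * exp (-w ^ 2) * ∫ t in 0..T, cos (x * t) * exp (-w ^ 2 * t ^ 2) := by
  set F : ℝ → ℝ → ℝ := fun t w => 2 / √π * exp (-w ^ 2) * (cos (x * t) * exp (-w ^ 2 * t ^ 2))
  have hrep (t : ℝ) : cos (x * t) / √(t ^ 2 + 1) = ∫ w in Ioi 0, F t w := by
    rw [div_eq_mul_inv, inv_sqrt_eq_integral_exp_neg_mul_sq (by positivity), mul_left_comm,
      ← integral_const_mul, ← integral_const_mul]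
    congr 1 with w
    rw [show -(t ^ 2 + 1) * w ^ 2 = -w ^ 2 + -w ^ 2 * t ^ 2 by ring, exp_add]
    ring
  have : IsFiniteMeasure (volume.restrict (uIoc 0 T)) := isFiniteMeasure_restrict_Ioc _ _
  have hF : Integrable (Function.uncurry F)
      ((volume.restrict (uIoc 0 T)).prod (volume.restrict (Ioi 0))) := by
    refine Integrable.mono' (g := fun p => 2 / √π * exp (-1 * p.2 ^ 2))
      (((integrable_exp_neg_mul_sq one_pos).integrableOn.const_mul _).comp_snd _)
      (by fun_prop : Continuous (Function.uncurry F)).aestronglyMeasurable (ae_of_all _ ?_)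
    rintro ⟨t, w⟩
    simp only [Function.uncurry_apply_pair, F, norm_mul, norm_of_nonneg (exp_pos _).le,
      norm_div, norm_of_nonneg (sqrt_nonneg _), Real.norm_two, neg_mul, one_mul]
    refine mul_le_of_le_one_right (by positivity) (mul_le_one₀ (abs_cos_le_one _) (exp_pos _).le ?_)
    exact exp_le_one_iff.2 (by nlinarith [sq_nonneg (w * t)])
  simp_rw [hrep]
  rw [intervalIntegral_integral_swap hF]
  congr 1 with w
  exact intervalIntegral.integral_const_mul _ _

theorem tendsto_intervalIntegral_cos_div_sqrt {x : ℝ} (hx : 0 < x) :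
    Tendsto (fun T => ∫ t in 0..T, cos (x * t) / √(t ^ 2 + 1)) atTop
      (nhds (∫ w in Ioi 0, exp (-w ^ 2 - x ^ 2 / (4 * w ^ 2)) / w)) := by
  simp_rw [intervalIntegral_cos_div_sqrt_eq]
  refine tendsto_integral_filter_of_dominated_convergence
    (fun w => 2 / √π * exp (-1 * w ^ 2) * (1 / x)) ?_ ?_
    (((integrable_exp_neg_mul_sq one_pos).integrableOn.const_mul _).mul_const _) ?_
  · refine Eventually.of_forall fun T => Continuous.aestronglyMeasurable ?_
    exact (by fun_prop : Continuous fun w : ℝ => 2 / √π * exp (-w ^ 2)).mul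
      (intervalIntegral.continuous_parametric_intervalIntegral_of_continuous'
        (f := fun w t => cos (x * t) * exp (-w ^ 2 * t ^ 2)) (by fun_prop) 0 T)
  · filter_upwards [eventually_ge_atTop 0] with T hT
    refine ae_of_all _ fun w => ?_
    have hg (t : ℝ) : HasDerivAt (fun t => exp (-w ^ 2 * t ^ 2))
        (-w ^ 2 * (2 * t) * exp (-w ^ 2 * t ^ 2)) t := by
      simpa [mul_comm] using ((hasDerivAt_pow 2 t).const_mul (-w ^ 2)).exp
    have hI := abs_intervalIntegral_cos_mul_le hx hT (fun t _ => hg t)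
      ((by fun_prop : Continuous _).intervalIntegrable _ _)
      (fun t ht => mul_nonpos_of_nonpos_of_nonneg (mul_nonpos_of_nonpos_of_nonneg
        (neg_nonpos.2 (sq_nonneg w)) (by linarith [ht.1])) (exp_pos _).le)
      (exp_pos _).le
    simp only [mul_zero, zero_pow two_ne_zero, exp_zero] at hI
    rw [norm_mul, Real.norm_eq_abs, Real.norm_eq_abs, abs_of_pos (by positivity), neg_mul, one_mul]
    gcongr
  · filter_upwards [ae_restrict_mem measurableSet_Ioi] with w (hw : 0 < w)
    have hw2 : 0 < w ^ 2 := by positivity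
    have hint : IntegrableOn (fun t => cos (x * t) * exp (-w ^ 2 * t ^ 2)) (Ioi 0) := by
      refine (integrable_exp_neg_mul_sq hw2).integrableOn.mono'
        (by fun_prop : Continuous _).aestronglyMeasurable (ae_of_all _ fun t => ?_)
      rw [norm_mul, Real.norm_eq_abs, norm_of_nonneg (exp_pos _).le]
      exact mul_le_of_le_one_left (exp_pos _).le (abs_cos_le_one _)
    have hlim : exp (-w ^ 2 - x ^ 2 / (4 * w ^ 2)) / w =
        2 / √π * exp (-w ^ 2) * ∫ t in Ioi 0, cos (x * t) * exp (-w ^ 2 * t ^ 2) := by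
      rw [integral_Ioi_cos_mul_exp_neg_mul_sq hw2, sqrt_div pi_pos.le, sqrt_sq hw.le,
        sub_eq_add_neg, exp_add, neg_div]
      field_simp
    rw [hlim]
    exact (intervalIntegral_tendsto_integral_Ioi 0 hint tendsto_id).const_mul _

theorem integral_rpow_sub_one_mul_exp_neg_mul_sq {b s : ℝ} (hb : 0 < b) (hs : 0 < s) :
    ∫ x in Ioi 0, x ^ (s - 1) * exp (-b * x ^ 2) = b ^ (-s / 2) * Gamma (s / 2) / 2 := by
  have h := integral_rpow_mul_exp_neg_mul_rpow two_pos (by linarith : -1 < s - 1) hb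
  simp only [rpow_two, sub_add_cancel] at h
  rw [h, neg_div]
  ring

theorem sq_div_four_mul_sq_rpow_neg_div_two {β w : ℝ} (hβ : 0 < β) (hw : 0 < w) (s : ℝ) :
    (β ^ 2 / (4 * w ^ 2)) ^ (-s / 2) = (2 / β) ^ s * w ^ s := by
  have hc : 0 < β / (2 * w) := by positivity
  rw [show β ^ 2 / (4 * w ^ 2) = (β / (2 * w)) ^ (2 : ℝ) by rw [rpow_two]; ring,
    ← rpow_mul hc.le, show 2 * (-s / 2) = -s by ring, rpow_neg hc.le, ← inv_rpow hc.le,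
    inv_div, mul_div_right_comm, mul_rpow (by positivity) hw.le]

theorem integral_rpow_sub_one_mul_integral_exp_div {β s : ℝ} (hβ : 0 < β) (hs : 0 < s) :
    ∫ x in Ioi 0, x ^ (s - 1) * ∫ w in Ioi 0, exp (-w ^ 2 - (β * x) ^ 2 / (4 * w ^ 2)) / w =
      2 ^ (s - 2) * β ^ (-s) * Gamma (s / 2) ^ 2 := by
  set F : ℝ → ℝ → ℝ := fun x w => x ^ (s - 1) * (exp (-w ^ 2 - (β * x) ^ 2 / (4 * w ^ 2)) / w)
  set C : ℝ := (2 / β) ^ s * Gamma (s / 2) / 2 with hC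
  have hfactor (x w : ℝ) : F x w =
      exp (-w ^ 2) / w * (x ^ (s - 1) * exp (-(β ^ 2 / (4 * w ^ 2)) * x ^ 2)) := by
    simp only [F, sub_eq_add_neg, exp_add]
    ring_nf
  have hF_int {w : ℝ} (hw : 0 < w) : IntegrableOn (F · w) (Ioi 0) := by
    simp only [hfactor]
    exact (integrableOn_rpow_mul_exp_neg_mul_sq (by positivity) (by linarith)).const_mul _
  have hinner {w : ℝ} (hw : 0 < w) :
      ∫ x in Ioi 0, F x w = C * (w ^ (s - 1) * exp (-1 * w ^ 2)) := by
    simp only [hfactor, integral_const_mul, C]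
    rw [integral_rpow_sub_one_mul_exp_neg_mul_sq (by positivity) hs,
      sq_div_four_mul_sq_rpow_neg_div_two hβ hw, rpow_sub_one hw.ne', neg_mul, one_mul]
    field_simp
  have hG_int : IntegrableOn (fun w => w ^ (s - 1) * exp (-1 * w ^ 2)) (Ioi 0) :=
    integrableOn_rpow_mul_exp_neg_mul_sq one_pos (by linarith)
  have hF : Integrable (Function.uncurry F)
      ((volume.restrict (Ioi 0)).prod (volume.restrict (Ioi 0))) := by
    have hmeas : Measurable (Function.uncurry F) := by fun_prop
    refine (integrable_prod_iff' hmeas.aestronglyMeasurable).2 ⟨?_, ?_⟩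
    · filter_upwards [ae_restrict_mem measurableSet_Ioi] with w hw using hF_int hw
    · refine (hG_int.const_mul C).congr ?_
      filter_upwards [ae_restrict_mem measurableSet_Ioi] with w (hw : 0 < w)
      rw [← hinner hw]
      refine setIntegral_congr_fun measurableSet_Ioi fun x (hx : 0 < x) => ?_
      exact (norm_of_nonneg (by positivity)).symm
  calc ∫ x in Ioi 0, x ^ (s - 1) * ∫ w in Ioi 0, exp (-w ^ 2 - (β * x) ^ 2 / (4 * w ^ 2)) / w
      = ∫ w in Ioi 0, ∫ x in Ioi 0, F x w := by
        simp only [F, ← integral_const_mul]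
        exact integral_integral_swap hF
    _ = ∫ w in Ioi 0, C * (w ^ (s - 1) * exp (-1 * w ^ 2)) :=
        setIntegral_congr_fun measurableSet_Ioi fun w hw => hinner hw
    _ = 2 ^ (s - 2) * β ^ (-s) * Gamma (s / 2) ^ 2 := by
        rw [integral_const_mul, integral_rpow_sub_one_mul_exp_neg_mul_sq one_pos hs, one_rpow, hC,
          div_rpow zero_le_two hβ.le, rpow_sub two_pos, rpow_neg hβ.le]
        field_simp
        norm_num

theorem stmt_11 (K0 : ℝ → ℝ)
    (hK0 : ∀ x ∈ Ioi (0:ℝ),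
      Tendsto (fun T => ∫ t in (0:ℝ)..T, Real.cos (x * t) / Real.sqrt (t ^ 2 + 1))
        atTop (nhds (K0 x)))
    (β s : ℝ) (hβ : 0 < β) (hs : 0 < s) :
    ∫ x in Ioi (0:ℝ), x ^ (s - 1) * K0 (β * x) =
      (2 : ℝ) ^ (s - 2) * β ^ (-s) * Real.Gamma (s / 2) ^ 2 := by
  have hK0_eq {x : ℝ} (hx : 0 < x) : K0 x = ∫ w in Ioi 0, exp (-w ^ 2 - x ^ 2 / (4 * w ^ 2)) / w :=
    tendsto_nhds_unique (hK0 x hx) (tendsto_intervalIntegral_cos_div_sqrt hx)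
  rw [← integral_rpow_sub_one_mul_integral_exp_div hβ hs]
  refine setIntegral_congr_fun measurableSet_Ioi fun x (hx : 0 < x) => ?_
  rw [hK0_eq (mul_pos hβ hx)]
end

section
/- Let a and b be real numbers with 0 ≤ a < b. Then ∫_0^∞ e^{−a x} K₀(b x) dx = arccos(a/b)/√(b² − a²). -/
/-!
Integrating by parts against the decreasing weight `1/√(t²+1)` bounds the truncated integrals
`∫_0^T cos(xt)/√(t²+1) dt` by `3/√x` uniformly in `T`. For `a > 0` dominated convergence and
Fubini, with `∫_0^∞ e^{-ax} cos(cx) dx = a/(a²+c²)`, turn the left side into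
`∫_0^∞ a dt / ((a² + b²t²) √(t²+1))`, and `arctan (c t / (a √(t²+1))) / (a c)` with
`c = √(b²-a²)` is a primitive of the integrand divided by `a`; its value at infinity is
`arctan (c/a) / (a c)`, and `arctan (c/a) = arccos (a/b)`.
For `a = 0` a second integration by parts gives `|K₀(x)| ≤ 5/x²`, so `K₀(b·)` is integrable
and the case follows by letting `a → 0⁺`.
-/

open MeasureTheory Filter Set Topology Real intervalIntegral

namespace BesselK0

noncomputable def weight (t : ℝ) : ℝ := (√(t ^ 2 + 1))⁻¹

lemma weight_pos (t : ℝ) : 0 < weight t := inv_pos.2 (sqrt_pos.2 (by positivity))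

lemma weight_sq_mul (t : ℝ) : weight t ^ 2 * (t ^ 2 + 1) = 1 := by
  rw [weight, inv_pow, sq_sqrt (by positivity), inv_mul_cancel₀ (by positivity)]

lemma continuous_weight : Continuous weight :=
  (by fun_prop : Continuous fun t : ℝ => √(t ^ 2 + 1)).inv₀ fun t =>
    (sqrt_pos.2 (by positivity)).ne'

lemma hasDerivAt_weight (t : ℝ) : HasDerivAt weight (-(t * weight t ^ 3)) t := by
  have hpos : 0 < t ^ 2 + 1 := by positivity
  have h := (((hasDerivAt_pow 2 t).add_const 1).sqrt hpos.ne').inv (sqrt_pos.2 hpos).ne'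
  refine h.congr_deriv ?_
  have hs := (sqrt_pos.2 hpos).ne'
  simp only [weight]
  field_simp
  norm_num

lemma weight_le_one (t : ℝ) : weight t ≤ 1 :=
  inv_le_one_of_one_le₀ (one_le_sqrt.2 (by nlinarith))

lemma mul_weight_eq_sqrt {t : ℝ} (ht : 0 ≤ t) : t * weight t = √(1 - weight t ^ 2) := by
  rw [← sqrt_sq (mul_nonneg ht (weight_pos t).le)]
  congr 1
  linear_combination weight_sq_mul t

lemma mul_weight_le_one {t : ℝ} (ht : 0 ≤ t) : t * weight t ≤ 1 := by
  rw [mul_weight_eq_sqrt ht, sqrt_le_one]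
  nlinarith [weight_pos t]

lemma weight_le_inv {t : ℝ} (ht : 0 < t) : weight t ≤ t⁻¹ := by
  rw [le_inv_comm₀ (weight_pos t) ht, inv_eq_one_div, le_div_iff₀ (weight_pos t)]
  exact mul_weight_le_one ht.le

lemma tendsto_weight_atTop : Tendsto weight atTop (𝓝 0) :=
  squeeze_zero' (Eventually.of_forall fun t => (weight_pos t).le)
    ((eventually_gt_atTop 0).mono fun _ => weight_le_inv) tendsto_inv_atTop_zero

lemma tendsto_mul_weight_atTop : Tendsto (fun t => t * weight t) atTop (𝓝 1) := by
  have h : Tendsto (fun t => √(1 - weight t ^ 2)) atTop (𝓝 1) := by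
    simpa using ((tendsto_weight_atTop.pow 2).const_sub 1).sqrt
  exact h.congr' ((eventually_ge_atTop 0).mono fun _ ht => (mul_weight_eq_sqrt ht).symm)

lemma hasDerivAt_mul_weight (t : ℝ) : HasDerivAt (fun t => t * weight t) (weight t ^ 3) t := by
  refine ((hasDerivAt_id' t).mul (hasDerivAt_weight t)).congr_deriv ?_
  linear_combination (-1 : ℝ) * weight t * weight_sq_mul t

theorem abs_integral_mul_deriv_le {f f' v v' : ℝ → ℝ} {A B M : ℝ} (hAB : A ≤ B)
    (hf : ∀ t ∈ uIcc A B, HasDerivAt f (f' t) t)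
    (hv : ∀ t ∈ uIcc A B, HasDerivAt v (v' t) t)
    (hf' : IntervalIntegrable f' volume A B) (hv' : IntervalIntegrable v' volume A B)
    (hM : ∀ t ∈ Icc A B, |v t| ≤ M) :
    |∫ t in A..B, f t * v' t| ≤ M * (|f A| + |f B| + ∫ t in A..B, |f' t|) := by
  have hvc : ContinuousOn v (uIcc A B) := fun t ht =>
    (hv t ht).continuousAt.continuousWithinAt
  have hM0 : 0 ≤ M := (abs_nonneg _).trans (hM A (left_mem_Icc.2 hAB))
  have hrem : |∫ t in A..B, f' t * v t| ≤ M * ∫ t in A..B, |f' t| := by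
    rw [← intervalIntegral.integral_const_mul]
    refine (abs_integral_le_integral_abs hAB).trans
      (integral_mono_on hAB (hf'.mul_continuousOn hvc).abs (hf'.abs.const_mul M) fun t ht => ?_)
    rw [abs_mul, mul_comm M]
    exact mul_le_mul_of_nonneg_left (hM t ht) (abs_nonneg _)
  rw [integral_mul_deriv_eq_deriv_mul hf hv hf' hv']
  have hA := hM A (left_mem_Icc.2 hAB)
  have hB := hM B (right_mem_Icc.2 hAB)
  calc |f B * v B - f A * v A - ∫ t in A..B, f' t * v t|
      ≤ |f B| * |v B| + |f A| * |v A| + |∫ t in A..B, f' t * v t| := by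
        rw [← abs_mul, ← abs_mul]
        linarith [abs_sub (f B * v B - f A * v A) (∫ t in A..B, f' t * v t),
          abs_sub (f B * v B) (f A * v A)]
    _ ≤ M * (|f A| + |f B| + ∫ t in A..B, |f' t|) := by
        nlinarith [abs_nonneg (f A), abs_nonneg (f B)]

theorem abs_integral_mul_cos_le {f f' : ℝ → ℝ} {x A B : ℝ} (hx : 0 < x) (hAB : A ≤ B)
    (hf : ∀ t ∈ uIcc A B, HasDerivAt f (f' t) t) (hf' : IntervalIntegrable f' volume A B) :
    |∫ t in A..B, f t * cos (x * t)| ≤ (|f A| + |f B| + ∫ t in A..B, |f' t|) / x := by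
  rw [div_eq_inv_mul]
  refine abs_integral_mul_deriv_le (v := fun t => sin (x * t) / x) hAB hf (fun t _ => ?_) hf'
    ((by fun_prop : Continuous fun t => cos (x * t)).intervalIntegrable A B) fun t _ => ?_
  · simpa [mul_div_cancel_right₀ _ hx.ne'] using
      (((hasDerivAt_id t).const_mul x).sin).div_const x
  · rw [abs_div, abs_of_pos hx, div_le_iff₀ hx, inv_mul_cancel₀ hx.ne']
    exact abs_sin_le_one _

theorem abs_integral_mul_sin_le {f f' : ℝ → ℝ} {x A B : ℝ} (hx : 0 < x) (hAB : A ≤ B)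
    (hf : ∀ t ∈ uIcc A B, HasDerivAt f (f' t) t) (hf' : IntervalIntegrable f' volume A B) :
    |∫ t in A..B, f t * sin (x * t)| ≤ (|f A| + |f B| + ∫ t in A..B, |f' t|) / x := by
  rw [div_eq_inv_mul]
  refine abs_integral_mul_deriv_le (v := fun t => -cos (x * t) / x) hAB hf (fun t _ => ?_) hf'
    ((by fun_prop : Continuous fun t => sin (x * t)).intervalIntegrable A B) fun t _ => ?_
  · simpa [mul_div_cancel_right₀ _ hx.ne'] using
      (((hasDerivAt_id t).const_mul x).cos.neg).div_const x
  · rw [abs_div, abs_neg, abs_of_pos hx, div_le_iff₀ hx, inv_mul_cancel₀ hx.ne']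
    exact abs_cos_le_one _

noncomputable def truncK0 (x T : ℝ) : ℝ := ∫ t in (0 : ℝ)..T, weight t * cos (x * t)

lemma truncK0_eq_integral_cos_div_sqrt (x T : ℝ) :
    truncK0 x T = ∫ t in (0 : ℝ)..T, cos (x * t) / √(t ^ 2 + 1) := by
  simp only [truncK0, weight, div_eq_mul_inv, mul_comm]

lemma continuous_weight_mul_cos (x : ℝ) : Continuous fun t => weight t * cos (x * t) :=
  continuous_weight.mul (by fun_prop)

lemma continuous_truncK0_mul (b T : ℝ) : Continuous fun x => truncK0 (b * x) T :=
  continuous_parametric_intervalIntegral_of_continuous' (by have := continuous_weight; fun_prop) 0 T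

lemma abs_truncK0_le_self (x : ℝ) {T : ℝ} (hT : 0 ≤ T) : |truncK0 x T| ≤ T := by
  have h := norm_integral_le_of_norm_le_const (a := 0) (b := T) (C := 1)
    (f := fun t => weight t * cos (x * t)) fun t _ => by
      rw [norm_mul, Real.norm_of_nonneg (weight_pos t).le]
      exact mul_le_one₀ (weight_le_one t) (norm_nonneg _) (abs_cos_le_one _)
  simpa [truncK0, abs_of_nonneg hT] using h

lemma abs_integral_weight_mul_cos_le {x A B : ℝ} (hx : 0 < x) (hA : 0 ≤ A) (hAB : A ≤ B) :
    |∫ t in A..B, weight t * cos (x * t)| ≤ 2 * weight A / x := by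
  have hcont : Continuous fun t => t * weight t ^ 3 := by
    have := continuous_weight; fun_prop
  have hvar : ∫ t in A..B, |-(t * weight t ^ 3)| = weight A - weight B := by
    calc ∫ t in A..B, |-(t * weight t ^ 3)| = ∫ t in A..B, t * weight t ^ 3 :=
          integral_congr fun t ht => by
            rw [uIcc_of_le hAB] at ht
            rw [abs_neg, abs_of_nonneg
              (mul_nonneg (hA.trans ht.1) (pow_nonneg (weight_pos t).le 3))]
      _ = weight A - weight B := by
          rw [integral_eq_sub_of_hasDerivAt (f := -weight)
            (fun t _ => by simpa using (hasDerivAt_weight t).neg) (hcont.intervalIntegrable A B),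
            Pi.neg_apply, Pi.neg_apply]
          ring
  refine (abs_integral_mul_cos_le hx hAB (fun t _ => hasDerivAt_weight t)
    (hcont.neg.intervalIntegrable A B)).trans (le_of_eq ?_)
  rw [hvar, abs_of_pos (weight_pos A), abs_of_pos (weight_pos B)]
  ring

/- Split at `A = x^(-1/2)`, where the trivial bound `A` on `[0, A]` and the by-parts bound
`2 / (A x)` on `[A, T]` balance. -/
lemma abs_truncK0_le {x T : ℝ} (hx : 0 < x) (hT : 0 ≤ T) :
    |truncK0 x T| ≤ 3 * x ^ (-(1 / 2) : ℝ) := by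
  set A := x ^ (-(1 / 2) : ℝ)
  have hA : 0 < A := rpow_pos_of_pos hx _
  have hAAx : A * A * x = 1 := by
    rw [← rpow_add hx, ← rpow_add_one hx.ne']
    norm_num
  rcases le_total T A with hTA | hAT
  · linarith [abs_truncK0_le_self x hT]
  have hhead := abs_truncK0_le_self x hA.le
  have htail := abs_integral_weight_mul_cos_le hx hA.le hAT
  have hweight : 2 * weight A / x ≤ 2 * A := by
    rw [div_le_iff₀ hx]
    have hinv : A⁻¹ = A * x := inv_eq_of_mul_eq_one_right (by rw [← mul_assoc, hAAx])
    linarith [weight_le_inv hA]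
  rw [truncK0, ← integral_add_adjacent_intervals
    ((continuous_weight_mul_cos x).intervalIntegrable 0 A)
    ((continuous_weight_mul_cos x).intervalIntegrable A T)]
  exact (abs_add_le _ _).trans (by rw [truncK0] at hhead; linarith)

lemma truncK0_eq_weight_mul_sin_add {x : ℝ} (hx : x ≠ 0) (T : ℝ) :
    truncK0 x T =
      weight T * sin (x * T) / x + (∫ t in (0 : ℝ)..T, t * weight t ^ 3 * sin (x * t)) / x := by
  have h := integral_mul_deriv_eq_deriv_mul (a := 0) (b := T) (v := fun t => sin (x * t) / x)
    (fun t _ => hasDerivAt_weight t)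
    (fun t _ => by simpa [mul_div_cancel_right₀ _ hx] using
      (((hasDerivAt_id t).const_mul x).sin).div_const x)
    ((by have := continuous_weight; fun_prop :
      Continuous fun t => -(t * weight t ^ 3)).intervalIntegrable 0 T)
    ((by fun_prop : Continuous fun t => cos (x * t)).intervalIntegrable 0 T)
  have hintegrand : ∀ t, -(t * weight t ^ 3) * (sin (x * t) / x) =
      -(t * weight t ^ 3 * sin (x * t) / x) := fun t => by ring
  simp only [truncK0, h, hintegrand, intervalIntegral.integral_neg, intervalIntegral.integral_div,
    mul_zero, sin_zero, zero_div]
  ring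

lemma hasDerivAt_mul_weight_pow_three (t : ℝ) :
    HasDerivAt (fun t => t * weight t ^ 3) (weight t ^ 3 - 3 * t ^ 2 * weight t ^ 5) t := by
  refine ((hasDerivAt_id' t).mul ((hasDerivAt_weight t).pow 3)).congr_deriv ?_
  simp only [Pi.pow_apply, Nat.cast_ofNat]
  ring

lemma abs_integral_mul_weight_pow_three_mul_sin_le {x T : ℝ} (hx : 0 < x) (hT : 0 ≤ T) :
    |∫ t in (0 : ℝ)..T, t * weight t ^ 3 * sin (x * t)| ≤ 5 / x := by
  have hcont : Continuous fun t => weight t ^ 3 - 3 * t ^ 2 * weight t ^ 5 := by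
    have := continuous_weight; fun_prop
  refine (abs_integral_mul_sin_le hx hT (fun t _ => hasDerivAt_mul_weight_pow_three t)
    (hcont.intervalIntegrable 0 T)).trans ?_
  gcongr
  have hend : |T * weight T ^ 3| ≤ 1 := by
    rw [abs_of_nonneg (by have := weight_pos T; positivity)]
    calc T * weight T ^ 3 = (T * weight T) * weight T ^ 2 := by ring
      _ ≤ 1 := mul_le_one₀ (mul_weight_le_one hT) (pow_nonneg (weight_pos T).le 2)
          (pow_le_one₀ (weight_pos T).le (weight_le_one T))
  have hvar : ∫ t in (0 : ℝ)..T, |weight t ^ 3 - 3 * t ^ 2 * weight t ^ 5| ≤ 4 := by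
    calc ∫ t in (0 : ℝ)..T, |weight t ^ 3 - 3 * t ^ 2 * weight t ^ 5|
        ≤ ∫ t in (0 : ℝ)..T, 4 * weight t ^ 3 := by
          refine integral_mono_on hT (hcont.abs.intervalIntegrable 0 T)
            (((continuous_weight.pow 3).const_mul 4).intervalIntegrable 0 T) fun t _ => ?_
          have hw := weight_pos t
          have htw : t ^ 2 * weight t ^ 2 ≤ 1 := by nlinarith [weight_sq_mul t]
          rw [abs_le]
          constructor <;> nlinarith [mul_le_mul_of_nonneg_right htw (pow_pos hw 3).le,
            mul_nonneg (sq_nonneg t) (pow_pos hw 5).le]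
      _ = 4 * (T * weight T) := by
          rw [intervalIntegral.integral_const_mul, integral_eq_sub_of_hasDerivAt
            (fun t _ => hasDerivAt_mul_weight t) ((continuous_weight.pow 3).intervalIntegrable 0 T)]
          simp
      _ ≤ 4 := by linarith [mul_weight_le_one hT]
  simp only [zero_mul, abs_zero, zero_add]
  linarith

lemma abs_le_rpow_neg_half_of_tendsto_truncK0 {x K : ℝ} (hx : 0 < x)
    (hK : Tendsto (truncK0 x) atTop (𝓝 K)) : |K| ≤ 3 * x ^ (-(1 / 2) : ℝ) :=
  le_of_tendsto hK.abs ((eventually_ge_atTop 0).mono fun _ hT => abs_truncK0_le hx hT)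

lemma abs_le_rpow_neg_two_of_tendsto_truncK0 {x K : ℝ} (hx : 0 < x)
    (hK : Tendsto (truncK0 x) atTop (𝓝 K)) : |K| ≤ 5 * x ^ (-2 : ℝ) := by
  have hbdry : Tendsto (fun T => weight T * sin (x * T) / x) atTop (𝓝 0) := by
    refine squeeze_zero_norm (fun T => ?_) (by simpa using tendsto_weight_atTop.div_const x)
    rw [norm_div, norm_mul, Real.norm_of_nonneg (weight_pos T).le, Real.norm_of_nonneg hx.le]
    gcongr
    exact mul_le_of_le_one_right (weight_pos T).le (abs_sin_le_one _)
  have hrest : Tendsto (fun T => (∫ t in (0 : ℝ)..T, t * weight t ^ 3 * sin (x * t)) / x)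
      atTop (𝓝 K) := by
    simpa [truncK0_eq_weight_mul_sin_add hx.ne'] using hK.sub hbdry
  refine le_of_tendsto hrest.abs ((eventually_ge_atTop 0).mono fun T hT => ?_)
  rw [abs_div, abs_of_pos hx, rpow_neg hx.le, rpow_two, div_le_iff₀ hx]
  calc |∫ t in (0 : ℝ)..T, t * weight t ^ 3 * sin (x * t)|
      ≤ 5 / x := abs_integral_mul_weight_pow_three_mul_sin_le hx hT
    _ = 5 * (x ^ 2)⁻¹ * x := by field_simp

lemma integral_exp_neg_mul_cos {a : ℝ} (ha : 0 < a) (c : ℝ) :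
    ∫ x in Ioi (0 : ℝ), exp (-(a * x)) * cos (c * x) = a / (a ^ 2 + c ^ 2) := by
  have hre : (-a + c * Complex.I).re < 0 := by simpa using ha
  have hint := integrableOn_exp_mul_complex_Ioi hre 0
  have hval := integral_exp_mul_complex_Ioi hre 0
  have hfun : (fun x : ℝ => exp (-(a * x)) * cos (c * x)) =
      fun x : ℝ => RCLike.re (Complex.exp ((-a + c * Complex.I) * x)) := by
    ext x
    simp [Complex.exp_re]
  rw [hfun, integral_re hint, hval]
  simp [Complex.div_re, Complex.normSq_apply]
  ring

section ArctanPrimitive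

variable {a c : ℝ}

lemma hasDerivAt_arctan_mul_weight (ha : 0 < a) (hc : 0 < c) (t : ℝ) :
    HasDerivAt (fun t => arctan (c * (t * weight t) / a) / (a * c))
      (weight t / (a ^ 2 + (a ^ 2 + c ^ 2) * t ^ 2)) t := by
  have hin : HasDerivAt (fun t => c * (t * weight t) / a) (c * weight t ^ 3 / a) t :=
    ((hasDerivAt_mul_weight t).const_mul c).div_const a
  refine (hin.arctan.div_const (a * c)).congr_deriv ?_
  have hw := weight_pos t
  field_simp
  linear_combination a ^ 2 * weight_sq_mul t

lemma tendsto_arctan_mul_weight :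
    Tendsto (fun t => arctan (c * (t * weight t) / a) / (a * c)) atTop
      (𝓝 (arctan (c / a) / (a * c))) := by
  have h := (((continuous_arctan.tendsto _).comp
    ((tendsto_mul_weight_atTop.const_mul c).div_const a))).div_const (a * c)
  simpa using h

lemma weight_div_nonneg (t : ℝ) : 0 ≤ weight t / (a ^ 2 + (a ^ 2 + c ^ 2) * t ^ 2) :=
  div_nonneg (weight_pos t).le (by positivity)

lemma integrableOn_weight_div (ha : 0 < a) (hc : 0 < c) :
    IntegrableOn (fun t => weight t / (a ^ 2 + (a ^ 2 + c ^ 2) * t ^ 2)) (Ioi 0) :=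
  integrableOn_Ioi_deriv_of_nonneg' (fun t _ => hasDerivAt_arctan_mul_weight ha hc t)
    (fun t _ => weight_div_nonneg t) tendsto_arctan_mul_weight

lemma integral_weight_div (ha : 0 < a) (hc : 0 < c) :
    ∫ t in Ioi (0 : ℝ), weight t / (a ^ 2 + (a ^ 2 + c ^ 2) * t ^ 2) =
      arctan (c / a) / (a * c) := by
  rw [integral_Ioi_of_hasDerivAt_of_nonneg' (fun t _ => hasDerivAt_arctan_mul_weight ha hc t)
    (fun t _ => weight_div_nonneg t) tendsto_arctan_mul_weight]
  simp

end ArctanPrimitive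

lemma integral_exp_mul_truncK0 {a : ℝ} (ha : 0 < a) (b : ℝ) {T : ℝ} (hT : 0 ≤ T) :
    ∫ x in Ioi (0 : ℝ), exp (-(a * x)) * truncK0 (b * x) T =
      ∫ t in (0 : ℝ)..T, a * (weight t / (a ^ 2 + b ^ 2 * t ^ 2)) := by
  set F : ℝ → ℝ → ℝ := fun x t => exp (-(a * x)) * (weight t * cos (b * t * x))
  have hF : Integrable (Function.uncurry F)
      ((volume.restrict (Ioi 0)).prod (volume.restrict (Ioc 0 T))) := by
    have hexp : IntegrableOn (fun x => exp (-(a * x))) (Ioi 0) := by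
      simpa using exp_neg_integrableOn_Ioi 0 ha
    refine (hexp.mul_prod (integrableOn_const (C := 1) measure_Ioc_lt_top.ne)).mono'
      (by have := continuous_weight; fun_prop :
        Continuous (Function.uncurry F)).aestronglyMeasurable
      (Eventually.of_forall fun ⟨x, t⟩ => ?_)
    rw [Function.uncurry_apply_pair, norm_mul, Real.norm_of_nonneg (exp_pos _).le, mul_one]
    refine mul_le_of_le_one_right (exp_pos _).le ?_
    rw [norm_mul, Real.norm_of_nonneg (weight_pos t).le]
    exact mul_le_one₀ (weight_le_one t) (norm_nonneg _) (abs_cos_le_one _)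
  calc ∫ x in Ioi (0 : ℝ), exp (-(a * x)) * truncK0 (b * x) T
      = ∫ x in Ioi (0 : ℝ), ∫ t in Ioc 0 T, F x t := by
        refine setIntegral_congr_fun measurableSet_Ioi fun x _ => ?_
        rw [truncK0, integral_of_le hT, ← MeasureTheory.integral_const_mul]
        simp only [F, mul_right_comm b]
    _ = ∫ t in Ioc 0 T, ∫ x in Ioi (0 : ℝ), F x t := integral_integral_swap hF
    _ = ∫ t in (0 : ℝ)..T, a * (weight t / (a ^ 2 + b ^ 2 * t ^ 2)) := by
        rw [integral_of_le hT]
        refine setIntegral_congr_fun measurableSet_Ioc fun t _ => ?_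
        simp only [F, mul_left_comm (exp _), MeasureTheory.integral_const_mul,
          integral_exp_neg_mul_cos ha]
        ring

lemma integrableOn_rpow_neg_half_mul_exp {a b : ℝ} (ha : 0 < a) (hb : 0 ≤ b) :
    IntegrableOn (fun x => (b * x) ^ (-(1 / 2) : ℝ) * exp (-(a * x))) (Ioi 0) := by
  have h : IntegrableOn
      (fun x => b ^ (-(1 / 2) : ℝ) * (x ^ (-(1 / 2) : ℝ) * exp (-a * x ^ (1 : ℝ)))) (Ioi 0) :=
    (integrableOn_rpow_mul_exp_neg_mul_rpow (by norm_num) one_pos ha).const_mul _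
  refine h.congr_fun (fun x hx => ?_) measurableSet_Ioi
  simp only [mul_rpow hb (le_of_lt hx), rpow_one, neg_mul, mul_assoc]

lemma arccos_div_eq_arctan {a b : ℝ} (ha : 0 < a) (hab : a < b) :
    arccos (a / b) = arctan (√(b ^ 2 - a ^ 2) / a) := by
  have hb : 0 < b := ha.trans hab
  rw [arccos_eq_arctan (div_pos ha hb), show 1 - (a / b) ^ 2 = (b ^ 2 - a ^ 2) / b ^ 2 by
    field_simp, sqrt_div' _ (sq_nonneg b), sqrt_sq hb.le]
  field_simp

theorem integral_exp_mul_eq_of_pos {K0 : ℝ → ℝ}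
    (hK0 : ∀ x, 0 < x → Tendsto (truncK0 x) atTop (𝓝 (K0 x))) {a b : ℝ} (ha : 0 < a)
    (hab : a < b) :
    ∫ x in Ioi (0 : ℝ), exp (-(a * x)) * K0 (b * x) = arccos (a / b) / √(b ^ 2 - a ^ 2) := by
  have hb : 0 < b := ha.trans hab
  rw [arccos_div_eq_arctan ha hab]
  set c := √(b ^ 2 - a ^ 2)
  have hc : 0 < c := sqrt_pos.2 (by nlinarith)
  have hb2 : b ^ 2 = a ^ 2 + c ^ 2 := by rw [sq_sqrt (by nlinarith)]; ring
  have hdom := tendsto_integral_filter_of_dominated_convergence (l := atTop)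
    (μ := volume.restrict (Ioi 0)) (F := fun T x => exp (-(a * x)) * truncK0 (b * x) T)
    (bound := fun x => 3 * ((b * x) ^ (-(1 / 2) : ℝ) * exp (-(a * x))))
    (Eventually.of_forall fun T => (by have := continuous_truncK0_mul b T; fun_prop :
      Continuous fun x => exp (-(a * x)) * truncK0 (b * x) T).aestronglyMeasurable)
    ((eventually_ge_atTop 0).mono fun T hT => (ae_restrict_mem measurableSet_Ioi).mono
      fun x hx => by
        rw [norm_mul, Real.norm_of_nonneg (exp_pos _).le, Real.norm_eq_abs, mul_comm, ← mul_assoc]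
        exact mul_le_mul_of_nonneg_right (abs_truncK0_le (mul_pos hb hx) hT) (exp_pos _).le)
    ((integrableOn_rpow_neg_half_mul_exp ha hb.le).const_mul 3)
    ((ae_restrict_mem measurableSet_Ioi).mono fun x hx =>
      (hK0 (b * x) (mul_pos hb hx)).const_mul _)
  have hswap : Tendsto (fun T => ∫ x in Ioi (0 : ℝ), exp (-(a * x)) * truncK0 (b * x) T) atTop
      (𝓝 (∫ t in Ioi (0 : ℝ), a * (weight t / (a ^ 2 + b ^ 2 * t ^ 2)))) := by
    refine (intervalIntegral_tendsto_integral_Ioi 0 ?_ tendsto_id).congr'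
      ((eventually_ge_atTop 0).mono fun T hT => (integral_exp_mul_truncK0 ha b hT).symm)
    rw [hb2]
    exact (integrableOn_weight_div ha hc).const_mul a
  rw [tendsto_nhds_unique hdom hswap, MeasureTheory.integral_const_mul, hb2,
    integral_weight_div ha hc]
  field_simp

lemma integrableOn_Ioi_of_abs_le_rpow {g : ℝ → ℝ} {C D s r : ℝ} (hs : -1 < s) (hr : r < -1)
    (hg : AEStronglyMeasurable g (volume.restrict (Ioi 0)))
    (h0 : ∀ x ∈ Ioc (0 : ℝ) 1, |g x| ≤ C * x ^ s)
    (h1 : ∀ x ∈ Ioi (1 : ℝ), |g x| ≤ D * x ^ r) :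
    IntegrableOn g (Ioi 0) := by
  rw [← Ioc_union_Ioi_eq_Ioi zero_le_one]
  refine IntegrableOn.union ?_ ?_
  · have hint : IntegrableOn (fun x => C * x ^ s) (Ioc 0 1) :=
      ((intervalIntegrable_iff_integrableOn_Ioc_of_le zero_le_one).1
        (intervalIntegral.intervalIntegrable_rpow' hs)).const_mul C
    exact hint.mono' (hg.mono_measure (Measure.restrict_mono Ioc_subset_Ioi_self le_rfl))
      ((ae_restrict_mem measurableSet_Ioc).mono h0)
  · have hint : IntegrableOn (fun x => D * x ^ r) (Ioi 1) :=
      (integrableOn_Ioi_rpow_of_lt hr one_pos).const_mul D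
    exact hint.mono' (hg.mono_measure (Measure.restrict_mono (Ioi_subset_Ioi zero_le_one) le_rfl))
      ((ae_restrict_mem measurableSet_Ioi).mono h1)

section Limit

variable {K0 : ℝ → ℝ} (hK0 : ∀ x, 0 < x → Tendsto (truncK0 x) atTop (𝓝 (K0 x)))
  {b : ℝ}
include hK0

lemma aestronglyMeasurable_comp_mul (hb : 0 < b) :
    AEStronglyMeasurable (fun x => K0 (b * x)) (volume.restrict (Ioi 0)) :=
  aestronglyMeasurable_of_tendsto_ae atTop (f := fun (n : ℕ) x => truncK0 (b * x) n)
    (fun n => (continuous_truncK0_mul b n).aestronglyMeasurable)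
    ((ae_restrict_mem measurableSet_Ioi).mono fun x hx =>
      (hK0 (b * x) (mul_pos hb hx)).comp tendsto_natCast_atTop_atTop)

lemma integrableOn_comp_mul (hb : 0 < b) : IntegrableOn (fun x => K0 (b * x)) (Ioi 0) := by
  refine integrableOn_Ioi_of_abs_le_rpow (s := -(1 / 2)) (r := -2) (C := 3 * b ^ (-(1 / 2) : ℝ))
    (D := 5 * b ^ (-2 : ℝ))
    (by norm_num) (by norm_num) (aestronglyMeasurable_comp_mul hK0 hb) (fun x hx => ?_)
    (fun x hx => ?_)
  · have h := abs_le_rpow_neg_half_of_tendsto_truncK0 (mul_pos hb hx.1) (hK0 _ (mul_pos hb hx.1))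
    rwa [mul_rpow hb.le hx.1.le, ← mul_assoc] at h
  · have hx0 : (0 : ℝ) < x := zero_lt_one.trans hx
    have h := abs_le_rpow_neg_two_of_tendsto_truncK0 (mul_pos hb hx0) (hK0 _ (mul_pos hb hx0))
    rwa [mul_rpow hb.le hx0.le, ← mul_assoc] at h

lemma tendsto_integral_exp_mul_nhdsGT_zero (hb : 0 < b) :
    Tendsto (fun a => ∫ x in Ioi (0 : ℝ), exp (-(a * x)) * K0 (b * x)) (𝓝[>] 0)
      (𝓝 (∫ x in Ioi (0 : ℝ), K0 (b * x))) := by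
  refine tendsto_integral_filter_of_dominated_convergence (fun x => |K0 (b * x)|)
    (Eventually.of_forall fun a =>
      ((by fun_prop : Continuous fun x => exp (-(a * x))).aestronglyMeasurable).mul
        (aestronglyMeasurable_comp_mul hK0 hb))
    ?_ (integrableOn_comp_mul hK0 hb).abs
    (Eventually.of_forall fun x => ?_)
  · filter_upwards [self_mem_nhdsWithin] with a (ha : 0 < a)
    filter_upwards [ae_restrict_mem measurableSet_Ioi] with x (hx : 0 < x)
    rw [norm_mul, Real.norm_of_nonneg (exp_pos _).le, Real.norm_eq_abs]
    exact mul_le_of_le_one_left (abs_nonneg _) (exp_le_one_iff.2 (by nlinarith))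
  · have h := ((by fun_prop : Continuous fun a => exp (-(a * x)) * K0 (b * x)).tendsto 0)
    simpa using h.mono_left nhdsWithin_le_nhds

theorem integral_comp_mul_eq (hb : 0 < b) : ∫ x in Ioi (0 : ℝ), K0 (b * x) = π / (2 * b) := by
  have hcont : ContinuousAt (fun a => arccos (a / b) / √(b ^ 2 - a ^ 2)) 0 :=
    ContinuousAt.div (by fun_prop) (by fun_prop) (by simp [sqrt_sq hb.le, hb.ne'])
  have hrhs :
      Tendsto (fun a => arccos (a / b) / √(b ^ 2 - a ^ 2)) (𝓝[>] 0) (𝓝 (π / (2 * b))) := by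
    simpa [sqrt_sq hb.le, div_div] using hcont.tendsto.mono_left nhdsWithin_le_nhds
  refine tendsto_nhds_unique (tendsto_integral_exp_mul_nhdsGT_zero hK0 hb) (hrhs.congr' ?_)
  filter_upwards [Ioo_mem_nhdsGT hb] with a ha
  exact (integral_exp_mul_eq_of_pos hK0 ha.1 ha.2).symm

end Limit

end BesselK0

theorem stmt_12 (K0 : ℝ → ℝ)
    (hK0 : ∀ x ∈ Ioi (0:ℝ),
      Tendsto (fun T => ∫ t in (0:ℝ)..T, Real.cos (x * t) / Real.sqrt (t ^ 2 + 1))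
        atTop (nhds (K0 x)))
    (a b : ℝ) (ha : 0 ≤ a) (hab : a < b) :
    ∫ x in Ioi (0:ℝ), Real.exp (-(a * x)) * K0 (b * x) =
      Real.arccos (a / b) / Real.sqrt (b ^ 2 - a ^ 2) := by
  have hK0' : ∀ x, 0 < x → Tendsto (BesselK0.truncK0 x) atTop (𝓝 (K0 x)) := fun x hx =>
    (hK0 x hx).congr fun T => (BesselK0.truncK0_eq_integral_cos_div_sqrt x T).symm
  rcases ha.eq_or_lt with rfl | ha
  · simpa [sqrt_sq hab.le, div_div] using BesselK0.integral_comp_mul_eq hK0' hab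
  · exact BesselK0.integral_exp_mul_eq_of_pos hK0' ha hab
end
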